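/- arXiv:1011.0071 — 6 statements merged into one kernel-verified Lean document; each statement's English description precedes it below -/
import Mathlib

section
/- Let X be a real Banach space, κ an uncountable regular cardinal, and {x_α}_{α<κ} a sequence of norm-one vectors in X which is weakly null (i.e. for every f ∈ X* and ε>0 there is β<κ with |f(x_α)|<ε whenever β<α<κ). Then there exists a strictly increasing map σ ↦ α_σ from κ to κ such that {x_{α_σ}}_{σ<κ} is a monotone transfinite basic sequence. -/
open Cardinal Ordinal Set Pointwise

universe u

noncomputable def closedSpan {X : Type u} [SeminormedAddCommGroup X] [NormedSpace ℝ X]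
    (s : Set X) : Submodule ℝ X :=
  (Submodule.span ℝ s).topologicalClosure

/-- transfinite basic sequence with constant C -/
def IsBasicSeqWithConst {X : Type u} [SeminormedAddCommGroup X] [NormedSpace ℝ X]
    (x : Ordinal.{u} → X) (θ : Ordinal.{u}) (C : ℝ) : Prop :=
  1 ≤ C ∧ (∀ α < θ, x α ≠ 0) ∧
  ∀ lam < θ, ∀ y ∈ closedSpan (x '' {α | α < lam}),
    ∀ z ∈ closedSpan (x '' {α | lam ≤ α ∧ α < θ}), ‖y‖ ≤ C * ‖y + z‖

def IsWeaklyNull {X : Type u} [SeminormedAddCommGroup X] [NormedSpace ℝ X]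
    (x : Ordinal.{u} → X) (θ : Ordinal.{u}) : Prop :=
  ∀ f : X →L[ℝ] ℝ, ∀ ε > (0:ℝ), ∃ β < θ, ∀ α, β < α → α < θ → |f (x α)| < ε

/-! For every `y` pick a norming functional `F y`; being weakly null over a regular uncountable
`κ`, the sequence is annihilated by `F y` from some index `B y < κ` on. Choose the indices `φ σ`
recursively so that `φ σ` exceeds `B y` for every rational combination `y` of the earlier
`x (φ τ)`: there are fewer than `κ` of these, so `φ σ < κ` by regularity. Rational combinations
of the head are dense in its closed span, and for each of them `‖y‖ = F y (y + z) ≤ ‖y + z‖` for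
every `z` in the closed span of the tail; density gives monotonicity. -/

lemma mk_span_rat_le {X : Type u} [AddCommGroup X] [Module ℚ X] (s : Set X) :
    #(Submodule.span ℚ s) ≤ max #s ℵ₀ := by
  rcases s.eq_empty_or_nonempty with rfl | hs
  · simp
  · have := hs.to_subtype
    calc #(Submodule.span ℚ s)
        = #(LinearMap.range (Finsupp.linearCombination ℚ ((↑) : s → X))) := by
          rw [Finsupp.range_linearCombination, Subtype.range_coe]
      _ ≤ #(s →₀ ℚ) := Cardinal.mk_range_le
      _ = max #s ℵ₀ := by simp [Cardinal.mk_finsupp_lift_of_infinite']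

lemma closedSpan_subset_closure_span_rat {X : Type u} [SeminormedAddCommGroup X]
    [NormedSpace ℝ X] [Module ℚ X] (s : Set X) :
    (closedSpan s : Set X) ⊆ closure (Submodule.span ℚ s) := by
  rw [closedSpan, Submodule.topologicalClosure_coe]
  refine closure_minimal (fun v hv => ?_) isClosed_closure
  induction hv using Submodule.span_induction with
  | mem v hv => exact subset_closure (Submodule.subset_span hv)
  | zero => exact subset_closure (zero_mem _)
  | add v w _ _ hv hw => exact map_mem_closure₂ continuous_add hv hw fun a ha b hb => add_mem ha hb
  | smul r v _ hv =>
    refine map_mem_closure₂ continuous_smul (Rat.denseRange_cast r) hv ?_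
    rintro _ ⟨q, rfl⟩ w hw
    rw [ratCast_smul_eq ℝ ℚ]
    exact Submodule.smul_mem _ q hw

lemma mk_span_rat_image_Iio_lt {X : Type u} [AddCommGroup X] [Module ℚ X] {κ : Cardinal.{u}}
    (hunc : ℵ₀ < κ) (x : Ordinal.{u} → X) {α : Ordinal.{u}} (hα : α < κ.ord) :
    #(Submodule.span ℚ (x '' Iio α)) < κ := by
  have himage : #(x '' Iio α) ≤ α.card := by
    rw [← Cardinal.lift_le.{u + 1}, Ordinal.lift_card]
    simpa using Cardinal.mk_image_le_lift (f := x) (s := Iio α)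
  exact (mk_span_rat_le _).trans_lt (max_lt (himage.trans_lt (Cardinal.lt_ord.1 hα)) hunc)

lemma norm_le_norm_add_of_subset_closure {X : Type u} [SeminormedAddCommGroup X]
    [NormedSpace ℝ X] {S D T : Set X} (hSD : S ⊆ closure D)
    (hD : ∀ y ∈ D, ∃ f : X →L[ℝ] ℝ, ‖f‖ ≤ 1 ∧ f y = ‖y‖ ∧ ∀ z ∈ T, f z = 0) :
    ∀ y ∈ S, ∀ z ∈ closedSpan T, ‖y‖ ≤ ‖y + z‖ := by
  have hclosed : IsClosed {y : X | ∀ z ∈ closedSpan T, ‖y‖ ≤ ‖y + z‖} := by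
    simp only [Set.ofPred_forall]
    exact isClosed_biInter fun z _ =>
      isClosed_le continuous_norm (continuous_id.add continuous_const).norm
  refine fun y₀ hy₀ => closure_minimal (fun y hy z hz => ?_) hclosed (hSD hy₀)
  obtain ⟨f, hf_norm, hf_y, hf_T⟩ := hD y hy
  have hf_z : f z = 0 := by
    have : closedSpan T ≤ LinearMap.ker (f : X →ₗ[ℝ] ℝ) :=
      Submodule.topologicalClosure_minimal _ (Submodule.span_le.2 hf_T) f.isClosed_ker
    exact this hz
  calc ‖y‖ = f (y + z) := by rw [map_add, hf_z, add_zero, hf_y]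
    _ ≤ ‖f (y + z)‖ := Real.le_norm_self _
    _ ≤ ‖y + z‖ := by simpa using f.le_of_opNorm_le hf_norm (y + z)

lemma IsWeaklyNull.exists_forall_apply_eq_zero {X : Type u} [SeminormedAddCommGroup X]
    [NormedSpace ℝ X] {κ : Cardinal.{u}} (hreg : κ.IsRegular) (hunc : ℵ₀ < κ)
    {x : Ordinal.{u} → X} (hnull : IsWeaklyNull x κ.ord) (f : X →L[ℝ] ℝ) :
    ∃ β < κ.ord, ∀ α, β < α → α < κ.ord → f (x α) = 0 := by
  choose β hβ hβ_small using fun n : ℕ => hnull f (1 / ((n : ℝ) + 1)) Nat.one_div_pos_of_nat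
  have hℕ : Cardinal.lift.{u} #ℕ < (Ordinal.lift.{0} κ.ord).cof := by
    simpa [← Ordinal.lift_cof, hreg.cof_ord] using hunc
  refine ⟨⨆ n, β n, Ordinal.lift_iSup_lt_of_lt_cof hℕ hβ, ?_⟩
  intro α hα hακ
  by_contra hne
  obtain ⟨n, hn⟩ := exists_nat_one_div_lt (abs_pos.2 hne)
  exact (hβ_small n α ((Ordinal.le_iSup β n).trans_lt hα) hακ).not_gt hn

lemma Cardinal.IsRegular.exists_strictMono_dominating {κ : Cardinal.{u}} (hreg : κ.IsRegular)
    (g : Ordinal.{u} → Ordinal.{u}) (hg : ∀ α < κ.ord, g α < κ.ord) :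
    ∃ φ : Ordinal.{u} → Ordinal.{u}, StrictMono φ ∧ (∀ σ < κ.ord, φ σ < κ.ord) ∧
      ∀ σ, g (⨆ τ : Iio σ, φ τ + 1) ≤ φ σ := by
  let φ : Ordinal.{u} → Ordinal.{u} := wellFounded_lt.fix fun σ φ =>
    max (⨆ τ : Iio σ, φ τ τ.2 + 1) (g (⨆ τ : Iio σ, φ τ τ.2 + 1))
  have hφ (σ) : φ σ = max (⨆ τ : Iio σ, φ τ + 1) (g (⨆ τ : Iio σ, φ τ + 1)) :=
    wellFounded_lt.fix_eq _ σ
  refine ⟨φ, fun τ σ h => ?_, fun σ => ?_, fun σ => (hφ σ).symm ▸ le_max_right _ _⟩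
  · rw [hφ σ]
    exact (Ordinal.lt_iSup_add_one (fun τ : Iio σ => φ τ) ⟨τ, h⟩).trans_le (le_max_left _ _)
  · induction σ using WellFoundedLT.induction with
    | _ σ ih =>
      intro hσ
      have hsup : ⨆ τ : Iio σ, φ τ + 1 < κ.ord := by
        refine Ordinal.lift_iSup_add_one_lt_of_lt_cof ?_ fun τ => ih τ τ.2 (τ.2.trans hσ)
        rw [← Ordinal.lift_cof, hreg.cof_ord, Cardinal.mk_Iio_ordinal, Cardinal.lift_lift]
        exact Cardinal.lift_lt.2 (Cardinal.lt_ord.1 hσ)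
      rw [hφ σ]
      exact max_lt hsup (hg _ hsup)

theorem stmt0_general {X : Type u} [NormedAddCommGroup X] [NormedSpace ℝ X]
    (κ : Cardinal.{u}) (hreg : κ.IsRegular) (hunc : ℵ₀ < κ)
    (x : Ordinal.{u} → X) (hnorm : ∀ α < κ.ord, ‖x α‖ = 1)
    (hnull : IsWeaklyNull x κ.ord) :
    ∃ φ : Ordinal.{u} → Ordinal.{u}, StrictMonoOn φ (Set.Iio κ.ord) ∧
      (∀ σ < κ.ord, φ σ < κ.ord) ∧
      IsBasicSeqWithConst (fun σ => x (φ σ)) κ.ord 1 := by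
  let : Module ℚ X := Module.compHom X (Rat.castHom ℝ)
  choose F hF_norm hF_y using fun y : X => exists_dual_vector'' ℝ y
  choose B hB_lt hB_zero using fun y => hnull.exists_forall_apply_eq_zero hreg hunc (F y)
  obtain ⟨φ, hφ_mono, hφ_lt, hφ_dom⟩ := hreg.exists_strictMono_dominating
    (fun α => ⨆ y : Submodule.span ℚ (x '' Iio α), B y + 1) fun α hα =>
      Ordinal.iSup_add_one_lt_of_lt_cof
        (by rw [hreg.cof_ord]; exact mk_span_rat_image_Iio_lt hunc x hα) fun y => hB_lt y
  refine ⟨φ, hφ_mono.strictMonoOn _, hφ_lt, le_rfl, fun σ hσ => ?_, fun lam _ y hy z hz => ?_⟩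
  · exact norm_ne_zero_iff.1 (by rw [hnorm _ (hφ_lt σ hσ)]; exact one_ne_zero)
  rw [one_mul]
  refine norm_le_norm_add_of_subset_closure (closedSpan_subset_closure_span_rat _)
    (fun y' hy' => ⟨F y', hF_norm y', hF_y y', ?_⟩) y hy z hz
  rintro _ ⟨σ, ⟨hlam_le, hσ⟩, rfl⟩
  refine hB_zero y' _ ?_ (hφ_lt σ hσ)
  have hy'σ : y' ∈ Submodule.span ℚ (x '' Iio (⨆ τ : Iio σ, φ τ + 1)) := by
    refine Submodule.span_mono ?_ hy'
    rintro _ ⟨τ, hτ, rfl⟩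
    exact ⟨φ τ, Ordinal.lt_iSup_add_one (fun τ : Iio σ => φ τ) ⟨τ, hτ.trans_le hlam_le⟩, rfl⟩
  exact (Ordinal.lt_iSup_add_one _ ⟨y', hy'σ⟩).trans_le (hφ_dom σ)

theorem stmt0 {X : Type u} [NormedAddCommGroup X] [NormedSpace ℝ X] [CompleteSpace X]
    (κ : Cardinal.{u}) (hreg : κ.IsRegular) (hunc : ℵ₀ < κ)
    (x : Ordinal.{u} → X) (hnorm : ∀ α < κ.ord, ‖x α‖ = 1)
    (hnull : IsWeaklyNull x κ.ord) :
    ∃ φ : Ordinal.{u} → Ordinal.{u}, StrictMonoOn φ (Set.Iio κ.ord) ∧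
      (∀ σ < κ.ord, φ σ < κ.ord) ∧
      IsBasicSeqWithConst (fun σ => x (φ σ)) κ.ord 1 :=
  stmt0_general κ hreg hunc x hnorm hnull
end

section
/- Let X be a real Banach space, κ an uncountable regular cardinal, and {x_α}_{α<κ} a strongly dispersed sequence in X. If X satisfies condition (B), then there is a strictly increasing map σ ↦ α_σ from κ to κ such that {x_{α_σ}}_{σ<κ} is a transfinite basic sequence; if moreover X satisfies condition (1-B), the subsequence can be chosen so that {x_{α_σ}}_{σ<κ} is a monotone transfinite basic sequence. -/
open Cardinal Ordinal Set Pointwise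

universe u

def IsDispersed {X : Type u} [SeminormedAddCommGroup X] [NormedSpace ℝ X]
    (x : Ordinal.{u} → X) (lam : Ordinal.{u}) : Prop :=
  ∀ β < lam,
    (⋂ γ ∈ Set.Iio lam, (closedSpan (x '' {α | γ < α ∧ α < lam}) : Set X)) ⊂
      (closedSpan (x '' {α | β < α ∧ α < lam}) : Set X)

def IsStronglyDispersed {X : Type u} [SeminormedAddCommGroup X] [NormedSpace ℝ X]
    (x : Ordinal.{u} → X) (lam : Ordinal.{u}) : Prop :=
  IsDispersed x lam ∧
    (⋂ β ∈ Set.Iio lam, (closedSpan (x '' {α | β < α ∧ α < lam}) : Set X)) = {0}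

/-- condition (B) -/
def CondB (X : Type u) [SeminormedAddCommGroup X] [NormedSpace ℝ X] : Prop :=
  ∀ κ : Cardinal.{u}, κ.IsRegular → ℵ₀ < κ →
    ∀ Z : Ordinal.{u} → Submodule ℝ X,
      (∀ α < κ.ord, IsClosed ((Z α : Set X))) →
      (∀ α β, α ≤ β → β < κ.ord → Z β ≤ Z α) →
      (⋂ α ∈ Set.Iio κ.ord, (Z α : Set X)) = {0} →
      Bornology.IsBounded
        (⋂ α ∈ Set.Iio κ.ord, closure (Metric.closedBall (0:X) 1 + (Z α : Set X)))

/-- condition (r-B) -/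
def CondrB (X : Type u) [SeminormedAddCommGroup X] [NormedSpace ℝ X] (r : ℝ) : Prop :=
  ∀ κ : Cardinal.{u}, κ.IsRegular → ℵ₀ < κ →
    ∀ Z : Ordinal.{u} → Submodule ℝ X,
      (∀ α < κ.ord, IsClosed ((Z α : Set X))) →
      (∀ α β, α ≤ β → β < κ.ord → Z β ≤ Z α) →
      (⋂ α ∈ Set.Iio κ.ord, (Z α : Set X)) = {0} →
      (⋂ α ∈ Set.Iio κ.ord, closure (Metric.closedBall (0:X) 1 + (Z α : Set X))) ⊆
        Metric.closedBall (0:X) r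

/-!
Write `Z β` for the closed span of the tail `{x α | β < α < κ}` and
`K λ = ⋂ β < λ, closure (B_X + Z β)`. Strong dispersion makes `Z` a decreasing family of closed
subspaces with trivial intersection, so condition (B) (resp. (1-B)) bounds `K κ` by some `r`
(resp. by `1`).

For a set `G` of fewer than `κ` vectors and `δ > 0`, some `K λ` meets `[G]` inside the ball of
radius `r + δ`. Otherwise pick `y λ ∈ [G] ∩ K λ` of larger norm and an `ε`-close point of a dense
subset of `[G]` of size `< κ`; by regularity of `κ` a single such point `d` serves cofinally many
`λ`, so `d / (1 + ε) ∈ K κ`, contradicting the bound on `K κ`. As `cof κ > ℵ₀`, the radius `r`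
itself is reached by taking countably many `δ`.

Choose `α_σ` recursively with `x α_σ ≠ 0`, beyond all earlier terms and beyond the `λ` obtained for
`G = {x α_τ | τ < σ}`. If `y ∈ [x α_τ : τ < σ]` and `z` lies in the span of the later terms, then
`y / s ∈ K α_σ` for every `s > ‖y + z‖`, hence `‖y‖ ≤ r ‖y + z‖`.
-/

namespace Ordinal

noncomputable def choiceSeq (o : Ordinal.{u}) (P : Set Ordinal.{u} → Ordinal.{u} → Prop)
    (σ : Ordinal.{u}) : Ordinal.{u} :=
  Classical.epsilon fun α => α < o ∧ (∀ τ : Iio σ, choiceSeq o P τ < α) ∧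
    P (range fun τ : Iio σ => choiceSeq o P τ) α
termination_by σ
decreasing_by all_goals exact τ.2

theorem exists_strictMonoOn_of_forall_exists {o : Ordinal.{u}}
    {P : Set Ordinal.{u} → Ordinal.{u} → Prop}
    (hP : ∀ σ < o, ∀ f : Iio σ → Ordinal.{u}, (∀ τ, f τ < o) →
      ∃ α < o, (∀ τ, f τ < α) ∧ P (range f) α) :
    ∃ φ : Ordinal.{u} → Ordinal.{u}, StrictMonoOn φ (Iio o) ∧
      ∀ σ < o, φ σ < o ∧ P (φ '' Iio σ) (φ σ) := by
  have key : ∀ σ < o, choiceSeq o P σ < o ∧ (∀ τ < σ, choiceSeq o P τ < choiceSeq o P σ) ∧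
      P (choiceSeq o P '' Iio σ) (choiceSeq o P σ) := by
    intro σ
    induction σ using WellFoundedLT.induction with
    | _ σ ih =>
      intro hσ
      have := Classical.epsilon_spec (hP σ hσ (fun τ => choiceSeq o P τ)
        fun τ => (ih τ τ.2 (τ.2.trans hσ)).1)
      rw [← choiceSeq] at this
      rw [image_eq_range]
      exact ⟨this.1, fun τ hτ => this.2.1 ⟨τ, hτ⟩, this.2.2⟩
  exact ⟨choiceSeq o P, fun σ _ τ hτ hστ => (key τ hτ).2.1 σ hστ,
    fun σ hσ => ⟨(key σ hσ).1, (key σ hσ).2.2⟩⟩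

end Ordinal

theorem Cardinal.IsRegular.exists_cofinal_fiber {κ : Cardinal.{u}} (hκ : κ.IsRegular)
    {ι : Type u} (hι : #ι < κ) (g : Iio κ.ord → ι) :
    ∃ t, ∀ β < κ.ord, ∃ lam : Iio κ.ord, β < lam ∧ g lam = t := by
  by_contra! h
  choose b hb hbg using h
  have hsup : (⨆ t, b t) + 1 < κ.ord :=
    (isSuccLimit_ord hκ.aleph0_le).add_one_lt (iSup_lt_of_lt_cof (by rwa [hκ.cof_ord]) hb)
  exact hbg (g ⟨_, hsup⟩) ⟨_, hsup⟩ ((Ordinal.le_iSup b _).trans_lt (lt_add_one _)) rfl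

section ClosedSpan

variable {X : Type u} [NormedAddCommGroup X] [NormedSpace ℝ X]

theorem closedSpan_le {G : Set X} {Z : Submodule ℝ X} (hG : G ⊆ Z) (hZ : IsClosed (Z : Set X)) :
    closedSpan G ≤ Z :=
  Submodule.topologicalClosure_minimal _ (Submodule.span_le.2 hG) hZ

theorem closedSpan_mono {G H : Set X} (h : G ⊆ H) : closedSpan G ≤ closedSpan H :=
  Submodule.topologicalClosure_mono (Submodule.span_mono h)

theorem exists_dense_subset_closedSpan (G : Set X) :
    ∃ D : Set X, #D ≤ max ℵ₀ #G ∧ (closedSpan G : Set X) ⊆ closure D := by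
  set comb : List (ℚ × G) → X := fun l => (l.map fun p => (p.1 : ℝ) • (p.2 : X)).sum
  refine ⟨range comb, mk_range_le.trans ((mk_list_le_max _).trans ?_), ?_⟩
  · rw [mk_prod, Cardinal.mkRat, lift_aleph0, Cardinal.lift_uzero]
    exact max_le le_sup_left (mul_le_max_of_aleph0_le_left le_rfl)
  -- The closure of the rational combinations is closed under real scalars since `ℚ` is dense.
  let M : Submodule ℝ X :=
    { carrier := closure (range comb)
      add_mem' := fun ha hb => map_mem_closure₂ continuous_add ha hb <| by
        rintro _ ⟨l₁, rfl⟩ _ ⟨l₂, rfl⟩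
        exact ⟨l₁ ++ l₂, by simp [comb]⟩
      zero_mem' := subset_closure ⟨[], rfl⟩
      smul_mem' := fun c v hv =>
        Rat.denseRange_cast.induction_on (p := fun c => c • v ∈ closure (range comb)) c
          (isClosed_closure.preimage (continuous_id.smul continuous_const)) fun q =>
            map_mem_closure (continuous_const_smul (q : ℝ)) hv <| by
              rintro _ ⟨l, rfl⟩
              exact ⟨l.map fun p => (q * p.1, p.2),
                by simp [comb, List.smul_sum, Function.comp_def, mul_smul]⟩ }
  exact closedSpan_le (Z := M) (fun g hg => subset_closure ⟨[(1, ⟨g, hg⟩)], by simp [comb]⟩)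
    isClosed_closure

end ClosedSpan

section BallAddInter

variable {X : Type u} [NormedAddCommGroup X] [NormedSpace ℝ X]

def ballAddInter (Z : Ordinal.{u} → Submodule ℝ X) (lam : Ordinal.{u}) : Set X :=
  ⋂ β ∈ Iio lam, closure (Metric.closedBall (0 : X) 1 + (Z β : Set X))

theorem ballAddInter_anti (Z : Ordinal.{u} → Submodule ℝ X) {lam lam' : Ordinal.{u}}
    (h : lam ≤ lam') : ballAddInter Z lam' ⊆ ballAddInter Z lam :=
  biInter_subset_biInter_left (Iio_subset_Iio h)

theorem inv_one_add_smul_mem_closure_ball_add {Z : Submodule ℝ X} {y d : X} {ε : ℝ}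
    (hε : 0 ≤ ε) (hy : y ∈ closure (Metric.closedBall (0 : X) 1 + (Z : Set X)))
    (hd : ‖d - y‖ ≤ ε) :
    (1 + ε)⁻¹ • d ∈ closure (Metric.closedBall (0 : X) 1 + (Z : Set X)) := by
  have hmaps : MapsTo (fun v => (1 + ε)⁻¹ • (v + (d - y)))
      (Metric.closedBall (0 : X) 1 + (Z : Set X))
      (Metric.closedBall (0 : X) 1 + (Z : Set X)) := by
    rintro _ ⟨b, hb, z, hz, rfl⟩
    refine ⟨(1 + ε)⁻¹ • (b + (d - y)), ?_, (1 + ε)⁻¹ • z, Z.smul_mem _ hz, ?_⟩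
    · rw [mem_closedBall_zero_iff] at hb ⊢
      rw [norm_smul, Real.norm_of_nonneg (by positivity), inv_mul_le_one₀ (by positivity)]
      exact (norm_add_le _ _).trans (add_le_add hb hd)
    · dsimp only
      rw [← smul_add, add_right_comm]
  simpa using hmaps.closure (by fun_prop) hy

theorem exists_inter_ballAddInter_subset_closedBall_of_lt {κ : Cardinal.{u}}
    (hκ : κ.IsRegular) (hunc : ℵ₀ < κ) {Z : Ordinal.{u} → Submodule ℝ X} {r C : ℝ}
    (hK : ballAddInter Z κ.ord ⊆ Metric.closedBall 0 r) (hrC : r < C) {G : Set X}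
    (hG : #G < κ) :
    ∃ lam < κ.ord, (closedSpan G : Set X) ∩ ballAddInter Z lam ⊆ Metric.closedBall 0 C := by
  obtain ⟨D, hDcard, hD⟩ := exists_dense_subset_closedSpan G
  -- chosen so that `(1 + ε) * r + ε ≤ C`
  set ε := (C - r) / (|r| + 1)
  have hε : 0 < ε := div_pos (by linarith) (by positivity)
  by_contra! hbad
  have hfar : ∀ lam : Iio κ.ord, ∃ d : D, ∃ y ∈ ballAddInter Z lam,
      C < ‖y‖ ∧ dist y d < ε := by
    intro lam
    obtain ⟨y, ⟨hyG, hyK⟩, hyC⟩ := not_subset.1 (hbad lam lam.2)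
    obtain ⟨d, hdD, hyd⟩ := Metric.mem_closure_iff.1 (hD hyG) ε hε
    exact ⟨⟨d, hdD⟩, y, hyK, by simpa using hyC, hyd⟩
  choose g y hyK hyC hyd using hfar
  obtain ⟨d, hd⟩ := hκ.exists_cofinal_fiber (hDcard.trans_lt (max_lt hunc hG)) g
  have hdK : (1 + ε)⁻¹ • (d : X) ∈ ballAddInter Z κ.ord := by
    refine mem_iInter₂.2 fun β hβ => ?_
    obtain ⟨lam, hβlam, rfl⟩ := hd β hβ
    exact inv_one_add_smul_mem_closure_ball_add hε.le (mem_iInter₂.1 (hyK lam) β hβlam)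
      (by rw [← dist_eq_norm, dist_comm]; exact (hyd lam).le)
  have hdr : ‖(d : X)‖ ≤ (1 + ε) * r := by
    have := hK hdK
    rwa [mem_closedBall_zero_iff, norm_smul, Real.norm_of_nonneg (by positivity),
      inv_mul_le_iff₀ (by positivity)] at this
  obtain ⟨lam, -, rfl⟩ := hd 0 (isSuccLimit_ord hκ.aleph0_le).pos
  have hεr : ε * (|r| + 1) = C - r := div_mul_cancel₀ _ (by positivity)
  have hr : ε * r ≤ ε * |r| := mul_le_mul_of_nonneg_left (le_abs_self r) hε.le
  have hyd' : ‖y lam‖ < ‖(g lam : X)‖ + ε := by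
    have := norm_le_norm_add_norm_sub' (y lam) (g lam)
    rw [← dist_eq_norm] at this
    linarith [hyd lam]
  nlinarith [hyC lam]

theorem exists_inter_ballAddInter_subset_closedBall {κ : Cardinal.{u}}
    (hκ : κ.IsRegular) (hunc : ℵ₀ < κ) {Z : Ordinal.{u} → Submodule ℝ X} {r : ℝ}
    (hK : ballAddInter Z κ.ord ⊆ Metric.closedBall 0 r) {G : Set X} (hG : #G < κ) :
    ∃ lam < κ.ord, (closedSpan G : Set X) ∩ ballAddInter Z lam ⊆ Metric.closedBall 0 r := by
  choose lam hlam hsub using fun n : ℕ =>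
    exists_inter_ballAddInter_subset_closedBall_of_lt hκ hunc hK
      (lt_add_of_pos_right r (Nat.one_div_pos_of_nat (n := n))) hG
  refine ⟨⨆ n, lam n, lift_iSup_lt_of_lt_cof (by simpa [hκ.cof_ord] using hunc) hlam,
    fun y hy => ?_⟩
  have hyn : ∀ n : ℕ, ‖y‖ ≤ r + 1 / ((n : ℝ) + 1) := fun n =>
    mem_closedBall_zero_iff.1 <| hsub n
      ⟨hy.1, ballAddInter_anti Z (Ordinal.le_iSup lam n) hy.2⟩
  have hlim := tendsto_one_div_add_atTop_nhds_zero_nat.const_add r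
  rw [add_zero] at hlim
  exact mem_closedBall_zero_iff.2 (ge_of_tendsto' hlim hyn)

theorem norm_le_mul_norm_add_of_inter_subset {Z : Ordinal.{u} → Submodule ℝ X}
    {μ : Ordinal.{u}} {V : Submodule ℝ X} {C : ℝ}
    (hV : (V : Set X) ∩ ballAddInter Z μ ⊆ Metric.closedBall 0 C) {v w : X} (hv : v ∈ V)
    (hw : ∀ β < μ, w ∈ Z β) : ‖v‖ ≤ C * ‖v + w‖ := by
  have hgt : ∀ s, ‖v + w‖ < s → ‖v‖ ≤ C * s := by
    intro s hs
    have hs0 : 0 < s := (norm_nonneg _).trans_lt hs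
    have hK : s⁻¹ • v ∈ ballAddInter Z μ := by
      refine mem_iInter₂.2 fun β hβ => subset_closure ⟨s⁻¹ • (v + w), ?_, -(s⁻¹ • w),
        (Z β).neg_mem ((Z β).smul_mem _ (hw β hβ)),
        by dsimp only; rw [smul_add, add_neg_cancel_right]⟩
      rw [mem_closedBall_zero_iff, norm_smul, Real.norm_of_nonneg (by positivity),
        inv_mul_le_one₀ hs0]
      exact hs.le
    have := mem_closedBall_zero_iff.1 (hV ⟨V.smul_mem _ hv, hK⟩)
    rw [norm_smul, Real.norm_of_nonneg (by positivity), inv_mul_le_iff₀ hs0] at this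
    linarith
  have hcl : IsClosed {s : ℝ | ‖v‖ ≤ C * s} := isClosed_le continuous_const (by fun_prop)
  have hmem : ‖v + w‖ ∈ closure (Ioi ‖v + w‖) := by rw [closure_Ioi]; exact self_mem_Ici
  exact hcl.closure_subset_iff.2 hgt hmem

end BallAddInter

section TailSpan

variable {X : Type u} [NormedAddCommGroup X] [NormedSpace ℝ X]

noncomputable def tailSpan (x : Ordinal.{u} → X) (o β : Ordinal.{u}) : Submodule ℝ X :=
  closedSpan (x '' {α | β < α ∧ α < o})

theorem isClosed_tailSpan (x : Ordinal.{u} → X) (o β : Ordinal.{u}) :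
    IsClosed (tailSpan x o β : Set X) :=
  Submodule.isClosed_topologicalClosure _

theorem tailSpan_anti (x : Ordinal.{u} → X) (o : Ordinal.{u}) {β β' : Ordinal.{u}}
    (h : β ≤ β') : tailSpan x o β' ≤ tailSpan x o β :=
  closedSpan_mono (image_mono fun _ hα => ⟨h.trans_lt hα.1, hα.2⟩)

theorem closedSpan_comp_tail_le_tailSpan {x : Ordinal.{u} → X} {o lam β : Ordinal.{u}}
    {φ : Ordinal.{u} → Ordinal.{u}} (hmono : StrictMonoOn φ (Iio o))
    (hφ : ∀ σ < o, φ σ < o) (hβ : β < φ lam) :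
    closedSpan ((fun σ => x (φ σ)) '' {α | lam ≤ α ∧ α < o}) ≤ tailSpan x o β := by
  refine closedSpan_mono ?_
  rintro _ ⟨σ, ⟨hlamσ, hσ⟩, rfl⟩
  exact ⟨φ σ, ⟨hβ.trans_le (hmono.monotoneOn (hlamσ.trans_lt hσ) hσ hlamσ), hφ σ hσ⟩, rfl⟩

theorem IsStronglyDispersed.exists_ne_zero {x : Ordinal.{u} → X} {o : Ordinal.{u}}
    (hsd : IsStronglyDispersed x o) {β : Ordinal.{u}} (hβ : β < o) :
    ∃ α, β < α ∧ α < o ∧ x α ≠ 0 := by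
  by_contra! h
  have hbot : tailSpan x o β = ⊥ := eq_bot_iff.2 <| closedSpan_le
    (by rintro _ ⟨α, hα, rfl⟩; simp [h α hα.1 hα.2]) (by simp)
  obtain ⟨v, hv, hv0⟩ := exists_of_ssubset (hsd.1 β hβ)
  rw [hsd.2] at hv0
  exact hv0 ((Submodule.mem_bot ℝ).1 (hbot ▸ hv))

theorem IsStronglyDispersed.exists_isBasicSeqWithConst {κ : Cardinal.{u}} (hκ : κ.IsRegular)
    (hunc : ℵ₀ < κ) {x : Ordinal.{u} → X} (hsd : IsStronglyDispersed x κ.ord) {r : ℝ}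
    (hr : 1 ≤ r) (hK : ballAddInter (tailSpan x κ.ord) κ.ord ⊆ Metric.closedBall 0 r) :
    ∃ φ : Ordinal.{u} → Ordinal.{u}, StrictMonoOn φ (Iio κ.ord) ∧
      (∀ σ < κ.ord, φ σ < κ.ord) ∧ IsBasicSeqWithConst (fun σ => x (φ σ)) κ.ord r := by
  obtain ⟨φ, hmono, hφ⟩ := Ordinal.exists_strictMonoOn_of_forall_exists (o := κ.ord)
    (P := fun S α => x α ≠ 0 ∧
      (closedSpan (x '' S) : Set X) ∩ ballAddInter (tailSpan x κ.ord) α ⊆ Metric.closedBall 0 r)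
    fun σ hσ f hf => by
      have hG : #(x '' range f) < κ := by
        have := mk_range_le_lift (f := x ∘ f)
        rw [range_comp, Cardinal.mk_Iio_ordinal, Cardinal.lift_lift, Cardinal.lift_le] at this
        exact this.trans_lt (lt_ord.1 hσ)
      obtain ⟨lam, hlam, hsub⟩ := exists_inter_ballAddInter_subset_closedBall hκ hunc hK hG
      have hsup : max lam (⨆ τ, f τ + 1) < κ.ord := max_lt hlam <|
        lift_iSup_add_one_lt_of_lt_cof (by
          rw [Cardinal.mk_Iio_ordinal, Cardinal.lift_lift, ← lift_cof, hκ.cof_ord,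
            Cardinal.lift_lt]
          exact lt_ord.1 hσ) hf
      obtain ⟨α, hα, hακ, hx⟩ := hsd.exists_ne_zero hsup
      refine ⟨α, hακ, fun τ => ?_, hx, (inter_subset_inter_right _
        (ballAddInter_anti _ ((le_max_left _ _).trans hα.le))).trans hsub⟩
      calc f τ < f τ + 1 := lt_add_one _
        _ ≤ ⨆ τ, f τ + 1 := Ordinal.le_iSup (fun τ => f τ + 1) τ
        _ ≤ max lam (⨆ τ, f τ + 1) := le_max_right _ _
        _ < α := hα
  refine ⟨φ, hmono, fun σ hσ => (hφ σ hσ).1, hr, fun σ hσ => (hφ σ hσ).2.1,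
    fun lam hlam y hy z hz => ?_⟩
  rw [← image_image x φ] at hy
  exact norm_le_mul_norm_add_of_inter_subset (hφ lam hlam).2.2 hy fun β hβ =>
    closedSpan_comp_tail_le_tailSpan hmono (fun σ hσ => (hφ σ hσ).1) hβ hz

end TailSpan

theorem stmt2_general {X : Type u} [NormedAddCommGroup X] [NormedSpace ℝ X]
    (κ : Cardinal.{u}) (hreg : κ.IsRegular) (hunc : ℵ₀ < κ)
    (x : Ordinal.{u} → X) (hsd : IsStronglyDispersed x κ.ord) :
    (CondB X →
      ∃ φ : Ordinal.{u} → Ordinal.{u}, StrictMonoOn φ (Set.Iio κ.ord) ∧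
        (∀ σ < κ.ord, φ σ < κ.ord) ∧
        ∃ C : ℝ, IsBasicSeqWithConst (fun σ => x (φ σ)) κ.ord C) ∧
    (CondB X → CondrB X 1 →
      ∃ φ : Ordinal.{u} → Ordinal.{u}, StrictMonoOn φ (Set.Iio κ.ord) ∧
        (∀ σ < κ.ord, φ σ < κ.ord) ∧
        IsBasicSeqWithConst (fun σ => x (φ σ)) κ.ord 1) := by
  have hclosed : ∀ β < κ.ord, IsClosed (tailSpan x κ.ord β : Set X) :=
    fun β _ => isClosed_tailSpan x κ.ord β
  have hanti : ∀ β β', β ≤ β' → β' < κ.ord → tailSpan x κ.ord β' ≤ tailSpan x κ.ord β :=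
    fun _ _ h _ => tailSpan_anti x κ.ord h
  refine ⟨fun hB => ?_, fun _ h1B => hsd.exists_isBasicSeqWithConst hreg hunc le_rfl
    (h1B κ hreg hunc _ hclosed hanti hsd.2)⟩
  obtain ⟨R, hR⟩ := (hB κ hreg hunc _ hclosed hanti hsd.2).subset_closedBall 0
  obtain ⟨φ, hmono, hφ, hbasic⟩ := hsd.exists_isBasicSeqWithConst hreg hunc (le_max_left 1 R)
    (hR.trans (Metric.closedBall_subset_closedBall (le_max_right 1 R)))
  exact ⟨φ, hmono, hφ, _, hbasic⟩

theorem stmt2 {X : Type u} [NormedAddCommGroup X] [NormedSpace ℝ X] [CompleteSpace X]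
    (κ : Cardinal.{u}) (hreg : κ.IsRegular) (hunc : ℵ₀ < κ)
    (x : Ordinal.{u} → X) (hsd : IsStronglyDispersed x κ.ord) :
    (CondB X →
      ∃ φ : Ordinal.{u} → Ordinal.{u}, StrictMonoOn φ (Set.Iio κ.ord) ∧
        (∀ σ < κ.ord, φ σ < κ.ord) ∧
        ∃ C : ℝ, IsBasicSeqWithConst (fun σ => x (φ σ)) κ.ord C) ∧
    (CondB X → CondrB X 1 →
      ∃ φ : Ordinal.{u} → Ordinal.{u}, StrictMonoOn φ (Set.Iio κ.ord) ∧
        (∀ σ < κ.ord, φ σ < κ.ord) ∧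
        IsBasicSeqWithConst (fun σ => x (φ σ)) κ.ord 1) :=
  stmt2_general κ hreg hunc x hsd
end

section
/- Let X be a real Banach space. If X satisfies condition (I), then every closed linear subspace of X and every quotient of X by a closed linear subspace satisfies condition (B). If X satisfies condition (II), then every closed linear subspace of X and every quotient of X by a closed linear subspace satisfies condition (1-B). -/
open Cardinal Ordinal Set Pointwise

universe u

/-- condition (I) -/
def CondI (X : Type u) [SeminormedAddCommGroup X] [NormedSpace ℝ X] : Prop :=
  ∀ κ : Cardinal.{u}, κ.IsRegular → ℵ₀ < κ →
    ∀ A : Ordinal.{u} → Set X,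
      (∀ α < κ.ord, ∃ (v : X) (Z : Submodule ℝ X), IsClosed (Z : Set X) ∧
          A α = (fun z => v + z) '' (Z : Set X)) →
      (∀ α β, α ≤ β → β < κ.ord → A β ⊆ A α) →
      (∀ α < κ.ord, (A α).Nonempty) →
      (⋂ α ∈ Set.Iio κ.ord, A α).Nonempty

/-- condition (II) -/
def CondII (X : Type u) [SeminormedAddCommGroup X] [NormedSpace ℝ X] : Prop :=
  ∀ κ : Cardinal.{u}, κ.IsRegular → ℵ₀ < κ →
    ∀ Z : Ordinal.{u} → Submodule ℝ X,
      (∀ α < κ.ord, IsClosed ((Z α : Set X))) →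
      (∀ α β, α ≤ β → β < κ.ord → Z β ≤ Z α) →
      ∀ f : X →L[ℝ] ℝ, (∀ v ∈ ⋂ α ∈ Set.Iio κ.ord, (Z α : Set X), f v = 0) →
        ∃ α < κ.ord, ∀ v ∈ Z α, f v = 0

/-!
(I) implies (II): if `f ∈ X*` vanishes on `⋂ Z_α` but on no `Z_α`, then the sets `Z_α ∩ {f = 1}`
form a decreasing chain of nonempty closed affine subspaces with empty intersection.
(II) implies (1-B): every `f` vanishes on some `Z_α`, so `|f| ≤ ‖f‖` on `cl(B_X + Z_α)`, and these
bounds for all `f` give `‖x‖ ≤ 1` by Hahn–Banach. Finally (II) passes to closed subspaces (extend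
functionals by Hahn–Banach; the `Z_α` stay closed in `X`) and to quotients (compose functionals
with the quotient map and pull the `Z_α` back).
-/

theorem Submodule.inter_preimage_singleton_eq_image_add_inf_ker {R M N : Type*} [Ring R]
    [AddCommGroup M] [Module R M] [AddCommGroup N] [Module R N] (Z : Submodule R M)
    (f : M →ₗ[R] N) {w : M} (hw : w ∈ Z) :
    (Z : Set M) ∩ f ⁻¹' {f w} =
      (fun z => w + z) '' ((Z ⊓ LinearMap.ker f : Submodule R M) : Set M) := by
  ext x
  simp only [mem_inter_iff, mem_preimage, mem_singleton_iff, mem_image, SetLike.mem_coe,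
    Submodule.mem_inf, LinearMap.mem_ker]
  constructor
  · rintro ⟨hx, hfx⟩
    exact ⟨x - w, ⟨Z.sub_mem hx hw, by simp [hfx]⟩, add_sub_cancel w x⟩
  · rintro ⟨z, ⟨hz, hfz⟩, rfl⟩
    exact ⟨Z.add_mem hw hz, by rw [map_add, hfz, add_zero]⟩

section

variable {X : Type u} [SeminormedAddCommGroup X] [NormedSpace ℝ X]

theorem CondI.condII (h : CondI X) : CondII X := by
  intro κ hreg hκ Z hcl hmono f hf
  by_contra! hc
  have hZ_one : ∀ α < κ.ord, ∃ w ∈ Z α, f w = 1 := fun α hα => by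
    obtain ⟨v, hv, hfv⟩ := hc α hα
    exact ⟨(f v)⁻¹ • v, (Z α).smul_mem _ hv, by simp [hfv]⟩
  let A : Ordinal.{u} → Set X := fun α => (Z α : Set X) ∩ f ⁻¹' {1}
  have hA_affine : ∀ α < κ.ord, ∃ (v : X) (Z' : Submodule ℝ X), IsClosed (Z' : Set X) ∧
      A α = (fun z => v + z) '' (Z' : Set X) := fun α hα => by
    obtain ⟨w, hw, hfw⟩ := hZ_one α hα
    refine ⟨w, Z α ⊓ LinearMap.ker (f : X →ₗ[ℝ] ℝ), ?_, ?_⟩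
    · exact (hcl α hα).inter (isClosed_singleton.preimage f.continuous)
    · rw [← (Z α).inter_preimage_singleton_eq_image_add_inf_ker _ hw]
      simp only [A, ContinuousLinearMap.coe_coe, hfw]
  obtain ⟨x, hx⟩ := h κ hreg hκ A hA_affine
    (fun α β hαβ hβ => inter_subset_inter_left _ (hmono α β hαβ hβ))
    (fun α hα => (hZ_one α hα).imp fun _ hw => hw)
  have hx_one : f x = 1 := (mem_iInter₂.1 hx 0 hreg.ord_pos).2
  have hx_zero : f x = 0 := hf x (mem_iInter₂.2 fun α hα => (mem_iInter₂.1 hx α hα).1)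
  exact one_ne_zero (hx_one.symm.trans hx_zero)

theorem CondII.condrB_one (h : CondII X) : CondrB X 1 := by
  intro κ hreg hκ Z hcl hmono hint x hx
  rw [mem_closedBall_zero_iff]
  refine NormedSpace.norm_le_dual_bound ℝ x zero_le_one fun f => ?_
  rw [one_mul]
  obtain ⟨α, hα, hfZ⟩ := h κ hreg hκ Z hcl hmono f fun v hv => by
    rw [hint, mem_singleton_iff] at hv
    rw [hv, map_zero]
  have hsub : Metric.closedBall (0 : X) 1 + (Z α : Set X) ⊆ {y | ‖f y‖ ≤ ‖f‖} := by
    rintro _ ⟨b, hb, z, hz, rfl⟩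
    simpa [hfZ z hz] using f.le_opNorm_of_le (mem_closedBall_zero_iff.1 hb)
  exact closure_minimal hsub (isClosed_le (by fun_prop) continuous_const) (mem_iInter₂.1 hx α hα)

theorem CondrB.condB {r : ℝ} (h : CondrB X r) : CondB X :=
  fun κ hreg hκ Z hcl hmono hint =>
    Metric.isBounded_closedBall.subset (h κ hreg hκ Z hcl hmono hint)

theorem CondII.submodule (h : CondII X) (Y : Submodule ℝ X) (hY : IsClosed (Y : Set X)) :
    CondII Y := by
  intro κ hreg hκ Z hcl hmono f hf
  obtain ⟨g, hg, -⟩ := exists_extension_norm_eq Y f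
  have hg_vanish : ∀ v ∈ ⋂ α ∈ Iio κ.ord, ((Z α).map Y.subtype : Set X), g v = 0 := by
    intro v hv
    obtain ⟨y, -, rfl⟩ := mem_iInter₂.1 hv 0 hreg.ord_pos
    have hy : ∀ α < κ.ord, y ∈ Z α := fun α hα => by
      simpa using mem_iInter₂.1 hv α hα
    exact (hg y).trans (hf y (mem_iInter₂.2 hy))
  obtain ⟨α, hα, hgZ⟩ := h κ hreg hκ (fun α => (Z α).map Y.subtype)
    (fun α hα => by
      rw [Submodule.map_coe]
      exact hY.isClosedMap_subtype_val _ (hcl α hα))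
    (fun α β hαβ hβ => Submodule.map_mono (hmono α β hαβ hβ)) g hg_vanish
  exact ⟨α, hα, fun v hv => hg v ▸ hgZ v (Submodule.mem_map_of_mem hv)⟩

theorem CondII.quotient (h : CondII X) (Y : Submodule ℝ X) : CondII (X ⧸ Y) := by
  intro κ hreg hκ Z hcl hmono f hf
  obtain ⟨α, hα, hfZ⟩ := h κ hreg hκ (fun α => (Z α).comap Y.mkQ)
    (fun α hα => (hcl α hα).preimage Y.mkQL.continuous)
    (fun α β hαβ hβ => Submodule.comap_mono (hmono α β hαβ hβ))
    (f.comp Y.mkQL) fun v hv => hf _ (mem_iInter₂.2 fun α hα => mem_iInter₂.1 hv α hα)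
  refine ⟨α, hα, fun w hw => ?_⟩
  obtain ⟨v, rfl⟩ := Y.mkQ_surjective w
  exact hfZ v hw

end

theorem stmt4_general {X : Type u} [NormedAddCommGroup X] [NormedSpace ℝ X] :
    (CondI X → ∀ Y : Submodule ℝ X, IsClosed (Y : Set X) →
      CondB ↥Y ∧ CondB (X ⧸ Y)) ∧
    (CondII X → ∀ Y : Submodule ℝ X, IsClosed (Y : Set X) →
      CondrB ↥Y 1 ∧ CondrB (X ⧸ Y) 1) := by
  have hII : CondII X → ∀ Y : Submodule ℝ X, IsClosed (Y : Set X) →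
      CondrB ↥Y 1 ∧ CondrB (X ⧸ Y) 1 := fun h Y hY =>
    ⟨(h.submodule Y hY).condrB_one, (h.quotient Y).condrB_one⟩
  refine ⟨fun h Y hY => ?_, hII⟩
  obtain ⟨hY_sub, hY_quot⟩ := hII h.condII Y hY
  exact ⟨hY_sub.condB, hY_quot.condB⟩

theorem stmt4 {X : Type u} [NormedAddCommGroup X] [NormedSpace ℝ X] [CompleteSpace X] :
    (CondI X → ∀ Y : Submodule ℝ X, IsClosed (Y : Set X) →
      CondB ↥Y ∧ CondB (X ⧸ Y)) ∧
    (CondII X → ∀ Y : Submodule ℝ X, IsClosed (Y : Set X) →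
      CondrB ↥Y 1 ∧ CondrB (X ⧸ Y) 1) :=
  stmt4_general
end

section
/- Let X be a real Banach space with a countably 1-norming M-basis {x_α}_{α<θ}, where θ is an uncountable cardinal. Then there exists an injective map φ: θ → θ such that {x_{φ(α)}}_{α<θ} is a monotone transfinite basic sequence; moreover, if θ is regular, then φ can be chosen to be strictly increasing. In particular, every nonseparable Plichko space contains a monotone basic sequence of length ω₁. -/
/-!
Functionals of the norming subspace have countable support on the basis, and finite
dimensional spans are separable, so every finite set `I` of indices carries a countable family
`ν I` of such functionals of norm `≤ 1` norming `span {x_α : α ∈ I}`. Choose `φ γ` by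
transfinite recursion, distinct from the earlier `φ β` and outside the supports of all
functionals in `ν I` for finite sets `I` of earlier indices `φ β`, `β < γ`: at most
`|γ| + ℵ₀ < θ` indices are forbidden. When `θ` is regular, the fewer than `θ` earlier indices
are bounded below `θ`, so `φ γ` can also be chosen above all of them. Every vector of
`[x_{φ β} : β < λ]` is then normed by functionals vanishing on `[x_{φ β} : β ≥ λ]`, which is
exactly monotonicity.
-/

open Cardinal Ordinal Set Pointwise

universe u

theorem exists_norming_of_norming_sphere {X : Type*} [NormedAddCommGroup X] [NormedSpace ℝ X]
    {p : (X →L[ℝ] ℝ) → Prop} (hp : p 0)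
    (h : ∀ v : X, ‖v‖ = 1 → ∀ ε > (0 : ℝ), ∃ g : X →L[ℝ] ℝ, p g ∧ ‖g‖ ≤ 1 ∧ 1 - ε < g v)
    (v : X) (ε : ℝ) (hε : 0 < ε) : ∃ g : X →L[ℝ] ℝ, p g ∧ ‖g‖ ≤ 1 ∧ ‖v‖ - ε < g v := by
  rcases eq_or_ne v 0 with rfl | hv
  · exact ⟨0, hp, by simp, by simpa using hε⟩
  have hv' : 0 < ‖v‖ := norm_pos_iff.2 hv
  obtain ⟨g, hpg, hg, hgv⟩ := h (‖v‖⁻¹ • v) (norm_smul_inv_norm hv) (ε / ‖v‖) (div_pos hε hv')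
  refine ⟨g, hpg, hg, ?_⟩
  rw [map_smul, _root_.smul_eq_mul] at hgv
  calc ‖v‖ - ε = ‖v‖ * (1 - ε / ‖v‖) := by field_simp
    _ < ‖v‖ * (‖v‖⁻¹ * g v) := mul_lt_mul_of_pos_left hgv hv'
    _ = g v := by field_simp

section Norming

variable {X : Type*} [SeminormedAddCommGroup X] [NormedSpace ℝ X]

theorem apply_le_norm_of_norm_le_one {g : X →L[ℝ] ℝ} (hg : ‖g‖ ≤ 1) (w : X) : g w ≤ ‖w‖ :=
  (le_abs_self _).trans (by simpa using g.le_of_opNorm_le hg w)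

theorem norm_sub_lt_apply_of_dist_lt {g : X →L[ℝ] ℝ} (hg : ‖g‖ ≤ 1) {a b : X} {δ η : ℝ}
    (hb : ‖b‖ - δ < g b) (hab : dist a b < η) : ‖a‖ - (δ + 2 * η) < g a := by
  have hgab := apply_le_norm_of_norm_le_one hg (b - a)
  rw [map_sub, norm_sub_rev, ← dist_eq_norm] at hgab
  have hab' := norm_sub_norm_le a b
  rw [← dist_eq_norm] at hab'
  linarith

theorem exists_countable_norming_of_isSeparable {p : (X →L[ℝ] ℝ) → Prop}
    (h : ∀ v : X, ∀ ε > (0 : ℝ), ∃ g : X →L[ℝ] ℝ, p g ∧ ‖g‖ ≤ 1 ∧ ‖v‖ - ε < g v)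
    {s : Set X} (hs : TopologicalSpace.IsSeparable s) :
    ∃ N : Set (X →L[ℝ] ℝ), N.Countable ∧ (∀ g ∈ N, p g) ∧
      ∀ y ∈ s, ∀ ε > (0 : ℝ), ∃ g ∈ N, ‖g‖ ≤ 1 ∧ ‖y‖ - ε < g y := by
  obtain ⟨D, hDc, hsD⟩ := hs
  choose K hKp hKn hK using fun (v : X) (n : ℕ) => h v (1 / (n + 1)) Nat.one_div_pos_of_nat
  refine ⟨(fun q : X × ℕ => K q.1 q.2) '' (D ×ˢ Set.univ), (hDc.prod countable_univ).image _,
    forall_mem_image.2 fun q _ => hKp q.1 q.2, fun y hy ε hε => ?_⟩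
  obtain ⟨v, hvD, hyv⟩ := Metric.mem_closure_iff.1 (hsD hy) (ε / 3) (by positivity)
  obtain ⟨n, hn⟩ := exists_nat_one_div_lt (show 0 < ε / 3 by positivity)
  refine ⟨K v n, mem_image_of_mem _ (mk_mem_prod hvD (mem_univ n)), hKn v n, ?_⟩
  have := norm_sub_lt_apply_of_dist_lt (hKn v n) (hK v n) hyv
  linarith

end Norming

section BasicSequence

variable {X : Type u} [SeminormedAddCommGroup X] [NormedSpace ℝ X]

theorem IsBasicSeqWithConst.mono {y : Ordinal.{u} → X} {θo θo' : Ordinal.{u}} {C : ℝ}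
    (h : IsBasicSeqWithConst y θo C) (hθ : θo' ≤ θo) : IsBasicSeqWithConst y θo' C := by
  obtain ⟨hC, hy, hbasic⟩ := h
  refine ⟨hC, fun α hα => hy α (hα.trans_le hθ),
    fun lam hlam w hw z hz => hbasic lam (hlam.trans_le hθ) w hw z ?_⟩
  have hsub : {α | lam ≤ α ∧ α < θo'} ⊆ {α | lam ≤ α ∧ α < θo} :=
    fun α hα => ⟨hα.1, hα.2.trans_le hθ⟩
  exact Submodule.topologicalClosure_mono (Submodule.span_mono (image_mono hsub)) hz

theorem apply_eq_zero_of_mem_closedSpan {s : Set X} {g : X →L[ℝ] ℝ} (h : ∀ v ∈ s, g v = 0)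
    {z : X} (hz : z ∈ closedSpan s) : g z = 0 :=
  Submodule.topologicalClosure_minimal _ (t := LinearMap.ker (g : X →ₗ[ℝ] ℝ))
    (Submodule.span_le.2 fun v hv => h v hv) g.isClosed_ker hz

theorem isBasicSeqWithConst_one_of_norming {y : Ordinal.{u} → X} {θo : Ordinal.{u}}
    (hy : ∀ α < θo, y α ≠ 0)
    (h : ∀ lam < θo, ∀ v ∈ Submodule.span ℝ (y '' Iio lam), ∀ ε > (0 : ℝ),
      ∃ g : X →L[ℝ] ℝ, ‖g‖ ≤ 1 ∧ ‖v‖ - ε < g v ∧ ∀ γ, lam ≤ γ → γ < θo → g (y γ) = 0) :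
    IsBasicSeqWithConst y θo 1 := by
  refine ⟨le_rfl, hy, fun lam hlam w hw z hz => ?_⟩
  rw [one_mul]
  refine le_of_forall_pos_lt_add fun ε hε => ?_
  obtain ⟨v, hv, hwv⟩ := Metric.mem_closure_iff.1 hw (ε / 3) (by positivity)
  obtain ⟨g, hg, hgv, htail⟩ := h lam hlam v hv (ε / 3) (by positivity)
  have hgz : g z = 0 :=
    apply_eq_zero_of_mem_closedSpan (forall_mem_image.2 fun γ hγ => htail γ hγ.1 hγ.2) hz
  have hgw := norm_sub_lt_apply_of_dist_lt hg hgv hwv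
  have hgwz := apply_le_norm_of_norm_le_one hg (w + z)
  rw [map_add, hgz, add_zero] at hgwz
  linarith

end BasicSequence

section Recursion

theorem mk_biUnion_finset_subset_le {α : Type*} (S : Finset α → Set α)
    (hS : ∀ I, (S I).Countable) (A : Set α) :
    #(⋃ I ∈ {I : Finset α | ↑I ⊆ A}, S I) ≤ max ℵ₀ #A := by
  classical
  have hfin : #{I : Finset α | ↑I ⊆ A} ≤ max ℵ₀ #A := by
    have hrange :
        {I : Finset α | ↑I ⊆ A} ⊆ range (Finset.map (Function.Embedding.subtype (· ∈ A))) :=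
      fun I hI => ⟨I.subtype (· ∈ A), Finset.subtype_map_of_mem hI⟩
    calc #{I : Finset α | ↑I ⊆ A} ≤ #(Finset A) := (mk_le_mk_of_subset hrange).trans mk_range_le
      _ ≤ #(List A) := mk_le_of_surjective List.toFinset_surjective
      _ ≤ max ℵ₀ #A := mk_list_le_max A
  calc #(⋃ I ∈ {I : Finset α | ↑I ⊆ A}, S I)
      ≤ #{I : Finset α | ↑I ⊆ A} * ⨆ I : {I : Finset α | ↑I ⊆ A}, #(S I) := mk_biUnion_le _ _
    _ ≤ max ℵ₀ #A * ℵ₀ := mul_le_mul' hfin (ciSup_le' fun I => (hS I).le_aleph0)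
    _ = max ℵ₀ #A := mul_aleph0_eq (le_max_left _ _)

theorem nonempty_Iio_ord_diff {θ : Cardinal.{u}} {S : Set Ordinal.{u}}
    (hS : #S < lift.{u + 1} θ) : (Iio θ.ord \ S).Nonempty := by
  rw [nonempty_iff_ne_empty, Ne, sdiff_eq_empty]
  intro hθS
  have := mk_le_mk_of_subset hθS
  rw [Cardinal.mk_Iio_ordinal, card_ord] at this
  exact hS.not_ge this

theorem exists_forall_lt_ord_notMem {θ : Cardinal.{u}} (B : Set Ordinal.{u} → Set Ordinal.{u})
    (hB : ∀ A ⊆ Iio θ.ord, #A < lift.{u + 1} θ → #(B A) < lift.{u + 1} θ) :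
    ∃ φ : Ordinal.{u} → Ordinal.{u}, ∀ γ < θ.ord, φ γ < θ.ord ∧ φ γ ∉ B (φ '' Iio γ) := by
  let φ : Ordinal.{u} → Ordinal.{u} :=
    Ordinal.lt_wf.fix fun γ ih => sInf (Iio θ.ord \ B (range fun β : Iio γ => ih β β.2))
  have hφ : ∀ γ, φ γ = sInf (Iio θ.ord \ B (φ '' Iio γ)) := fun γ => by
    rw [image_eq_range]
    exact Ordinal.lt_wf.fix_eq _ γ
  refine ⟨φ, fun γ => ?_⟩
  induction γ using WellFoundedLT.induction with | _ γ ih => ?_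
  intro hγ
  have hA : φ '' Iio γ ⊆ Iio θ.ord :=
    image_subset_iff.2 fun β hβ => (ih β hβ (lt_trans hβ hγ)).1
  have hAθ : #(φ '' Iio γ) < lift.{u + 1} θ := by
    refine mk_image_le.trans_lt ?_
    rw [Cardinal.mk_Iio_ordinal]
    exact lift_lt.2 (lt_ord.1 hγ)
  rw [hφ]
  exact csInf_mem (nonempty_Iio_ord_diff (hB _ hA hAθ))

theorem mk_lowerClosure_lt_of_isRegular {θ : Cardinal.{u}} (hθ : θ.IsRegular)
    {A : Set Ordinal.{u}} (hA : A ⊆ Iio θ.ord) (hAθ : #A < lift.{u + 1} θ) :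
    #(lowerClosure A : Set Ordinal.{u}) < lift.{u + 1} θ := by
  have hsup : sSup A < θ.ord :=
    sSup_lt_of_lt_cof (by rwa [← lift_cof, hθ.cof_ord]) fun a ha => hA ha
  have hsucc : Order.succ (sSup A) < θ.ord :=
    (isSuccLimit_ord hθ.aleph0_le).succ_lt hsup
  have hsub : (lowerClosure A : Set Ordinal.{u}) ⊆ Iio (Order.succ (sSup A)) := by
    rintro ξ ⟨a, ha, hξa⟩
    exact Order.lt_succ_of_le (hξa.trans (le_csSup ⟨θ.ord, fun b hb => (hA hb).le⟩ ha))
  refine (mk_le_mk_of_subset hsub).trans_lt ?_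
  rw [Cardinal.mk_Iio_ordinal]
  exact lift_lt.2 (lt_ord.1 hsucc)

theorem injOn_of_forall_notMem_image_Iio {α β : Type*} [LinearOrder α] {φ : α → β} {s : Set α}
    (h : ∀ γ ∈ s, φ γ ∉ φ '' Iio γ) : InjOn φ s := by
  intro a ha b hb hab
  by_contra hne
  rcases lt_or_gt_of_ne hne with hlt | hlt
  · exact h b hb ⟨a, hlt, hab⟩
  · exact h a ha ⟨b, hlt, hab.symm⟩

end Recursion

section Construction

structure IsCountableNormingFamily {X : Type u} [SeminormedAddCommGroup X] [NormedSpace ℝ X]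
    (x : Ordinal.{u} → X) (θo : Ordinal.{u}) (ν : Finset Ordinal.{u} → Set (X →L[ℝ] ℝ)) :
    Prop where
  countable : ∀ I, (ν I).Countable
  countable_support : ∀ I, ∀ g ∈ ν I, {α | α < θo ∧ g (x α) ≠ 0}.Countable
  norming : ∀ I : Finset Ordinal.{u}, ∀ v ∈ Submodule.span ℝ (x '' I), ∀ ε > (0 : ℝ),
    ∃ g ∈ ν I, ‖g‖ ≤ 1 ∧ ‖v‖ - ε < g v

theorem exists_isCountableNormingFamily {X : Type u} [NormedAddCommGroup X] [NormedSpace ℝ X]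
    {x : Ordinal.{u} → X} {θo : Ordinal.{u}}
    (hnorming : ∀ v : X, ‖v‖ = 1 → ∀ ε > (0 : ℝ), ∃ g : X →L[ℝ] ℝ,
      {α | α < θo ∧ g (x α) ≠ 0}.Countable ∧ ‖g‖ ≤ 1 ∧ 1 - ε < g v) :
    ∃ ν, IsCountableNormingFamily x θo ν := by
  choose ν hνc hνsupp hν using fun I : Finset Ordinal.{u} =>
    exists_countable_norming_of_isSeparable
      (exists_norming_of_norming_sphere (by simp) hnorming)
      ((I.finite_toSet.image x).countable.isSeparable.span (R := ℝ))
  exact ⟨ν, ⟨hνc, hνsupp, hν⟩⟩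

variable {X : Type u} [SeminormedAddCommGroup X] [NormedSpace ℝ X] {x : Ordinal.{u} → X}
  {θo : Ordinal.{u}} {ν : Finset Ordinal.{u} → Set (X →L[ℝ] ℝ)}

def normingSupport (x : Ordinal.{u} → X) (θo : Ordinal.{u})
    (ν : Finset Ordinal.{u} → Set (X →L[ℝ] ℝ)) (A : Set Ordinal.{u}) : Set Ordinal.{u} :=
  ⋃ I ∈ {I : Finset Ordinal.{u} | ↑I ⊆ A}, ⋃ g ∈ ν I, {α | α < θo ∧ g (x α) ≠ 0}

namespace IsCountableNormingFamily

theorem mk_normingSupport_le (hν : IsCountableNormingFamily x θo ν) (A : Set Ordinal.{u}) :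
    #(normingSupport x θo ν A) ≤ max ℵ₀ #A :=
  mk_biUnion_finset_subset_le _
    (fun I => (hν.countable I).biUnion (hν.countable_support I)) A

theorem isBasicSeqWithConst_comp (hν : IsCountableNormingFamily x θo ν)
    (hx : ∀ α < θo, x α ≠ 0) {φ : Ordinal.{u} → Ordinal.{u}}
    (hφ : ∀ γ < θo, φ γ < θo ∧ φ γ ∉ normingSupport x θo ν (φ '' Iio γ)) :
    IsBasicSeqWithConst (fun α => x (φ α)) θo 1 := by
  classical
  refine isBasicSeqWithConst_one_of_norming (fun α hα => hx _ (hφ α hα).1)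
    fun lam _ v hv ε hε => ?_
  rw [← image_image] at hv
  obtain ⟨T, hT, hvT⟩ := Submodule.mem_span_finite_of_mem_span hv
  obtain ⟨I, hI, rfl⟩ := Finset.subset_set_image_iff.1 hT
  rw [Finset.coe_image] at hvT
  obtain ⟨g, hgν, hg, hgv⟩ := hν.norming I v hvT ε hε
  refine ⟨g, hg, hgv, fun γ hlγ hγ => ?_⟩
  by_contra hne
  exact (hφ γ hγ).2 (mem_biUnion (hI.trans (image_mono (Iio_subset_Iio hlγ)))
    (mem_biUnion hgν ⟨(hφ γ hγ).1, hne⟩))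

theorem exists_comp_isBasicSeqWithConst {θ : Cardinal.{u}}
    (hν : IsCountableNormingFamily x θ.ord ν) (hx : ∀ α < θ.ord, x α ≠ 0) (hunc : ℵ₀ < θ)
    (C : Set Ordinal.{u} → Set Ordinal.{u})
    (hC : ∀ A ⊆ Iio θ.ord, #A < lift.{u + 1} θ → #(C A) < lift.{u + 1} θ) :
    ∃ φ : Ordinal.{u} → Ordinal.{u}, (∀ γ < θ.ord, φ γ < θ.ord ∧ φ γ ∉ C (φ '' Iio γ)) ∧
      IsBasicSeqWithConst (fun α => x (φ α)) θ.ord 1 := by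
  have hθ : ℵ₀ < lift.{u + 1} θ := aleph0_lt_lift.2 hunc
  obtain ⟨φ, hφ⟩ := exists_forall_lt_ord_notMem (fun A => C A ∪ normingSupport x θ.ord ν A)
    fun A hAθ hA => (mk_union_le _ _).trans_lt (add_lt_of_lt hθ.le (hC A hAθ hA)
      ((hν.mk_normingSupport_le A).trans_lt (max_lt hθ hA)))
  exact ⟨φ, fun γ hγ => ⟨(hφ γ hγ).1, fun h => (hφ γ hγ).2 (Or.inl h)⟩,
    hν.isBasicSeqWithConst_comp hx fun γ hγ => ⟨(hφ γ hγ).1, fun h => (hφ γ hγ).2 (Or.inr h)⟩⟩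

end IsCountableNormingFamily

end Construction

theorem stmt15_general {X : Type u} [NormedAddCommGroup X] [NormedSpace ℝ X]
    (θ : Cardinal.{u}) (hunc : ℵ₀ < θ)
    (x : Ordinal.{u} → X) (f : Ordinal.{u} → (X →L[ℝ] ℝ))
    (hbiorth : ∀ α < θ.ord, ∀ β < θ.ord, f α (x β) = if α = β then 1 else 0)
    -- the M-basis is countably 1-norming: the functionals with countable support
    -- on the basis form a 1-norming subspace
    (hnorming : ∀ v : X, ‖v‖ = 1 → ∀ ε > (0:ℝ), ∃ g : X →L[ℝ] ℝ,
      {α : Ordinal.{u} | α < θ.ord ∧ g (x α) ≠ 0}.Countable ∧ ‖g‖ ≤ 1 ∧ 1 - ε < g v) :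
    (∃ φ : Ordinal.{u} → Ordinal.{u}, Set.InjOn φ (Set.Iio θ.ord) ∧
      (∀ α < θ.ord, φ α < θ.ord) ∧
      IsBasicSeqWithConst (fun α => x (φ α)) θ.ord 1) ∧
    (θ.IsRegular →
      ∃ φ : Ordinal.{u} → Ordinal.{u}, StrictMonoOn φ (Set.Iio θ.ord) ∧
        (∀ α < θ.ord, φ α < θ.ord) ∧
        IsBasicSeqWithConst (fun α => x (φ α)) θ.ord 1) ∧
    -- in particular, `X` (a nonseparable Plichko space) contains a monotone
    -- basic sequence of length `ω₁`
    (∃ y : Ordinal.{u} → X, IsBasicSeqWithConst y (Cardinal.aleph 1).ord 1) := by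
  have hx : ∀ α < θ.ord, x α ≠ 0 := fun α hα h0 => by simpa [h0] using hbiorth α hα α hα
  obtain ⟨ν, hν⟩ := exists_isCountableNormingFamily hnorming
  obtain ⟨φ₁, hφ₁, hb₁⟩ := hν.exists_comp_isBasicSeqWithConst hx hunc id fun _ _ hA => hA
  refine ⟨⟨φ₁, ?_, fun α hα => (hφ₁ α hα).1, hb₁⟩, fun hreg => ?_, ⟨_, hb₁.mono ?_⟩⟩
  · exact injOn_of_forall_notMem_image_Iio fun γ hγ => (hφ₁ γ hγ).2
  · obtain ⟨φ₂, hφ₂, hb₂⟩ := hν.exists_comp_isBasicSeqWithConst hx hunc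
      (fun A => (lowerClosure A : Set Ordinal.{u}))
      fun _ hAθ hA => mk_lowerClosure_lt_of_isRegular hreg hAθ hA
    refine ⟨φ₂, fun a _ b hb hab => ?_, fun α hα => (hφ₂ α hα).1, hb₂⟩
    exact lt_of_not_ge fun hba => (hφ₂ b hb).2 ⟨φ₂ a, mem_image_of_mem _ hab, hba⟩
  · rw [ord_le_ord, ← succ_aleph0]
    exact Order.succ_le_of_lt hunc

theorem stmt15 {X : Type u} [NormedAddCommGroup X] [NormedSpace ℝ X] [CompleteSpace X]
    (θ : Cardinal.{u}) (hunc : ℵ₀ < θ)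
    (x : Ordinal.{u} → X) (f : Ordinal.{u} → (X →L[ℝ] ℝ))
    (hbiorth : ∀ α < θ.ord, ∀ β < θ.ord, f α (x β) = if α = β then 1 else 0)
    (hgen : closedSpan (x '' Set.Iio θ.ord) = ⊤)
    (hsep : ∀ v : X, v ≠ 0 → ∃ α < θ.ord, f α v ≠ 0)
    -- the M-basis is countably 1-norming: the functionals with countable support
    -- on the basis form a 1-norming subspace
    (hnorming : ∀ v : X, ‖v‖ = 1 → ∀ ε > (0:ℝ), ∃ g : X →L[ℝ] ℝ,
      {α : Ordinal.{u} | α < θ.ord ∧ g (x α) ≠ 0}.Countable ∧ ‖g‖ ≤ 1 ∧ 1 - ε < g v) :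
    (∃ φ : Ordinal.{u} → Ordinal.{u}, Set.InjOn φ (Set.Iio θ.ord) ∧
      (∀ α < θ.ord, φ α < θ.ord) ∧
      IsBasicSeqWithConst (fun α => x (φ α)) θ.ord 1) ∧
    (θ.IsRegular →
      ∃ φ : Ordinal.{u} → Ordinal.{u}, StrictMonoOn φ (Set.Iio θ.ord) ∧
        (∀ α < θ.ord, φ α < θ.ord) ∧
        IsBasicSeqWithConst (fun α => x (φ α)) θ.ord 1) ∧
    -- in particular, `X` (a nonseparable Plichko space) contains a monotone
    -- basic sequence of length `ω₁`
    (∃ y : Ordinal.{u} → X, IsBasicSeqWithConst y (Cardinal.aleph 1).ord 1) :=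
  stmt15_general θ hunc x f hbiorth hnorming
end

section
/- Let X be a WLD Banach space. If Y ⊆ X is a nonseparable closed subspace and Z ⊆ X is a coseparable closed subspace, then dens(Y ∩ Z) = dens(Y). More generally, for any countable sequence (E_n)_{n<ω} of closed subspaces of X, dens(X) = max( dens(⋂_{n<ω} E_n), sup_{n<ω} dens(X/E_n) ). -/
open Cardinal Ordinal Set Pointwise

universe u

/-- `X` is WLD: it admits an M-basis all of whose supports of functionals are countable. -/
def IsWLD (X : Type u) [SeminormedAddCommGroup X] [NormedSpace ℝ X] : Prop :=
  ∃ (ι : Type u) (x : ι → X) (f : ι → (X →L[ℝ] ℝ)),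
    (∀ i, f i (x i) = 1) ∧ (∀ i j, i ≠ j → f i (x j) = 0) ∧
    closedSpan (Set.range x) = ⊤ ∧
    (∀ v : X, v ≠ 0 → ∃ i, f i v ≠ 0) ∧
    (∀ g : X →L[ℝ] ℝ, {i | g (x i) ≠ 0}.Countable)

/-- density character: least cardinality of a dense subset (at least `ℵ₀`). -/
noncomputable def densChar (Y : Type u) [TopologicalSpace Y] : Cardinal.{u} :=
  max ℵ₀ (sInf {c : Cardinal.{u} | ∃ s : Set Y, Dense s ∧ #s = c})

/-!
Given a set `G` of functionals, a closing-off argument (each functional meets only countably many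
vectors of the M-basis) yields a set `B ⊇ G` of functionals and a set `D` with
`#D ≤ max ℵ₀ #G` such that `D` is dense in the closed span `S` of the basis vectors seen by `B`,
and `B` contains, at every point of `D`, norming functionals both for `X` and for `X ⧸ Y`.
Then `‖s‖ ≤ ‖s + w‖` for `s ∈ S` and `w` in the pre-annihilator `N` of `B`, so `S + N` is closed;
it contains every basis vector, hence `S ⊕ N = X`, and the projection onto `S` maps `Y` into `Y`.
Choosing for `G` functionals separating each `E n` from the outside, of which there are at most
`⨆ n, densChar (X ⧸ E n)`, every `y ∈ Y` is a point of `closure D` plus a point of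
`Y ⊓ ⨅ n, E n`.
-/

open Metric

namespace Cardinal

lemma mk_iUnion_nat_le {α : Type u} {κ : Cardinal.{u}} (hκ : ℵ₀ ≤ κ) {f : ℕ → Set α}
    (h : ∀ n, #(f n) ≤ κ) : #(⋃ n, f n) ≤ κ := by
  have := mk_iUnion_le_lift f
  simp only [lift_uzero, mk_nat, lift_aleph0] at this
  exact this.trans (mul_le_of_le hκ hκ (ciSup_le' h))

lemma mk_biUnion_le_of_mk_le {α ι : Type u} {κ : Cardinal.{u}} (hκ : ℵ₀ ≤ κ) {s : Set ι}
    {A : ι → Set α} (hs : #s ≤ κ) (hA : ∀ i ∈ s, #(A i) ≤ κ) : #(⋃ i ∈ s, A i) ≤ κ :=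
  (mk_biUnion_le A s).trans (mul_le_of_le hκ hs (ciSup_le' fun i => hA i i.2))

lemma mk_setOf_finset_subset_le {α : Type u} (A : Set α) :
    #{F : Finset α | ↑F ⊆ A} ≤ max ℵ₀ #A := by
  classical
  have hsub : {F : Finset α | ↑F ⊆ A} ⊆
      range fun F : Finset A => F.map (Function.Embedding.subtype _) :=
    fun F hF => ⟨F.subtype (· ∈ A), Finset.subtype_map_of_mem hF⟩
  exact (mk_le_mk_of_subset hsub).trans <| mk_range_le.trans <|
    (mk_le_of_surjective List.toFinset_surjective).trans (mk_list_le_max _)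

end Cardinal

section DensityCharacter

variable {Y : Type u} [TopologicalSpace Y]

lemma aleph0_le_densChar : ℵ₀ ≤ densChar Y := le_max_left _ _

lemma Dense.densChar_le {s : Set Y} (hs : Dense s) : densChar Y ≤ max ℵ₀ #s :=
  max_le_max le_rfl (csInf_le' ⟨s, hs, rfl⟩)

lemma exists_dense_mk_le_densChar (Y : Type u) [TopologicalSpace Y] :
    ∃ s : Set Y, Dense s ∧ #s ≤ densChar Y := by
  obtain ⟨s, hs, hc⟩ := csInf_mem (⟨_, univ, dense_univ, rfl⟩ :
    {c : Cardinal.{u} | ∃ s : Set Y, Dense s ∧ #s = c}.Nonempty)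
  exact ⟨s, hs, hc.le.trans (le_max_right _ _)⟩

lemma densChar_eq_aleph0 [TopologicalSpace.SeparableSpace Y] : densChar Y = ℵ₀ := by
  obtain ⟨s, hs, hdense⟩ := TopologicalSpace.exists_countable_dense Y
  exact le_antisymm (hdense.densChar_le.trans (max_le le_rfl hs.le_aleph0)) aleph0_le_densChar

lemma DenseRange.densChar_le {Z : Type u} [TopologicalSpace Z] {f : Y → Z}
    (hf : DenseRange f) (hfc : Continuous f) : densChar Z ≤ densChar Y := by
  obtain ⟨s, hs, hcard⟩ := exists_dense_mk_le_densChar Y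
  exact (hf.dense_image hfc hs).densChar_le.trans
    (max_le aleph0_le_densChar (mk_image_le.trans hcard))

end DensityCharacter

section Metric

variable {α : Type u} [PseudoMetricSpace α]

lemma exists_subset_mk_le_subset_closure {T D : Set α} (h : T ⊆ closure D) :
    ∃ D' ⊆ T, #D' ≤ max ℵ₀ #D ∧ T ⊆ closure D' := by
  have : ∀ (d : α) (n : ℕ), ∃ t, (T ∩ ball d (1 / (n + 1))).Nonempty →
      t ∈ T ∩ ball d (1 / (n + 1)) := fun d n =>
    (em _).elim (fun hne => ⟨hne.some, fun _ => hne.some_mem⟩) fun hne => ⟨d, fun h => absurd h hne⟩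
  choose c hc using this
  refine ⟨⋃ n : ℕ, (c · n) '' {d ∈ D | (T ∩ ball d (1 / (n + 1))).Nonempty}, ?_, ?_, ?_⟩
  · rintro _ ⟨_, ⟨n, rfl⟩, d, hd, rfl⟩
    exact (hc d n hd.2).1
  · exact mk_iUnion_nat_le (le_max_left _ _) fun n =>
      mk_image_le.trans <| (mk_sep _ _).le.trans <| (mk_subtype_le _).trans (le_max_right _ _)
  · intro t ht
    refine Metric.mem_closure_iff.2 fun ε hε => ?_
    obtain ⟨n, hn⟩ := exists_nat_one_div_lt (half_pos hε)
    obtain ⟨d, hd, htd⟩ := Metric.mem_closure_iff.1 (h ht) _ (Nat.one_div_pos_of_nat (n := n))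
    have hne : (T ∩ ball d (1 / (n + 1))).Nonempty := ⟨t, ht, mem_ball.2 htd⟩
    refine ⟨c d n, mem_iUnion.2 ⟨n, d, ⟨hd, hne⟩, rfl⟩, ?_⟩
    calc dist t (c d n) ≤ dist t d + dist (c d n) d := dist_triangle_right _ _ _
      _ < 1 / (n + 1) + 1 / (n + 1) := add_lt_add htd (hc d n hne).2
      _ < ε := by linarith

lemma densChar_subtype_le {T D : Set α} (h : T ⊆ closure D) : densChar T ≤ max ℵ₀ #D := by
  obtain ⟨D', hD'T, hcard, hcl⟩ := exists_subset_mk_le_subset_closure h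
  have hdense : Dense ((↑) ⁻¹' D' : Set T) := by
    rwa [Subtype.dense_iff, Subtype.image_preimage_coe, inter_eq_right.2 hD'T]
  exact hdense.densChar_le.trans <| max_le le_sup_left <|
    (mk_preimage_of_injective _ _ Subtype.coe_injective).trans hcard

lemma exists_mk_le_densChar_subset_closure (T : Set α) :
    ∃ D : Set α, #D ≤ densChar T ∧ T ⊆ closure D := by
  obtain ⟨s, hs, hcard⟩ := exists_dense_mk_le_densChar T
  refine ⟨(↑) '' s, mk_image_le.trans hcard, fun t ht => ?_⟩
  exact map_mem_closure continuous_subtype_val (hs ⟨t, ht⟩) (fun _ => mem_image_of_mem _)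

lemma densChar_subtype_le_densChar (T : Set α) : densChar T ≤ densChar α := by
  obtain ⟨s, hs, hcard⟩ := exists_dense_mk_le_densChar α
  exact (densChar_subtype_le fun t _ => hs t).trans (max_le aleph0_le_densChar hcard)

lemma densChar_subtype_mono {S T : Set α} (h : S ⊆ T) : densChar S ≤ densChar T := by
  obtain ⟨D, hcard, hD⟩ := exists_mk_le_densChar_subset_closure T
  exact (densChar_subtype_le (h.trans hD)).trans (max_le aleph0_le_densChar hcard)

end Metric

section Seminormed

variable {X : Type u} [SeminormedAddCommGroup X] [NormedSpace ℝ X]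

lemma exists_mk_le_span_subset_closure (A : Set X) :
    ∃ D : Set X, #D ≤ max ℵ₀ #A ∧ (Submodule.span ℝ A : Set X) ⊆ closure D := by
  choose c hc hcF using fun F : Finset X => F.finite_toSet.isSeparable.span (R := ℝ)
  refine ⟨⋃ F ∈ {F : Finset X | ↑F ⊆ A}, c F,
    mk_biUnion_le_of_mk_le (le_max_left _ _) (mk_setOf_finset_subset_le A)
      fun F _ => (hc F).le_aleph0.trans (le_max_left _ _), fun y hy => ?_⟩
  obtain ⟨F, hFA, hyF⟩ := Submodule.mem_span_finite_of_mem_span hy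
  exact closure_mono (subset_biUnion_of_mem (u := c) hFA) (hcF F hyF)

lemma span_iUnion_subset_closure_iUnion {A D : ℕ → Set X} (hA : Monotone A)
    (hD : ∀ n, (Submodule.span ℝ (A n) : Set X) ⊆ closure (D n)) :
    (Submodule.span ℝ (⋃ n, A n) : Set X) ⊆ closure (⋃ n, D n) := by
  rw [Submodule.span_iUnion, Submodule.coe_iSup_of_directed _
    (Monotone.directed_le fun m n hmn => Submodule.span_mono (hA hmn))]
  exact iUnion_subset fun n => (hD n).trans (closure_mono (subset_iUnion D n))

lemma exists_dual_abs_le_infDist (Y : Submodule ℝ X) (a : X) :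
    ∃ b : StrongDual ℝ X, (∀ u, |b u| ≤ infDist u Y) ∧ b a = infDist a Y := by
  obtain ⟨φ, hφ1, hφa⟩ := exists_dual_vector'' ℝ (Y.mkQ a)
  have hnorm (u : X) : ‖Y.mkQ u‖ = infDist u Y :=
    QuotientAddGroup.norm_mk (S := Y.toAddSubgroup) u
  refine ⟨φ.comp Y.mkQL, fun u => ?_, hφa.trans (hnorm a)⟩
  calc |φ (Y.mkQ u)| ≤ ‖φ‖ * ‖Y.mkQ u‖ := φ.le_opNorm _
    _ ≤ ‖Y.mkQ u‖ := mul_le_of_le_one_left (norm_nonneg _) hφ1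
    _ = infDist u Y := hnorm u

lemma norm_eq_zero_of_dense_of_forall_dual {Q : Type*} [SeminormedAddCommGroup Q]
    [NormedSpace ℝ Q] {s : Set Q} (hs : Dense s) {φ : Q → StrongDual ℝ Q}
    (hφ1 : ∀ q, ‖φ q‖ ≤ 1) (hφ : ∀ q, φ q q = ‖q‖) {v : Q} (hv : ∀ q ∈ s, φ q v = 0) :
    ‖v‖ = 0 := by
  by_contra hv0
  have hpos : 0 < ‖v‖ := (norm_nonneg v).lt_of_ne' hv0
  obtain ⟨q, hq, hvq⟩ := Metric.mem_closure_iff.1 (hs v) _ (half_pos hpos)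
  have hq_small : ‖q‖ ≤ ‖v - q‖ := by
    calc ‖q‖ = φ q (q - v) := by simp [hv q hq, hφ]
      _ ≤ ‖φ q (q - v)‖ := Real.le_norm_self _
      _ ≤ ‖φ q‖ * ‖q - v‖ := (φ q).le_opNorm _
      _ ≤ ‖v - q‖ := by rw [norm_sub_rev]; exact mul_le_of_le_one_left (norm_nonneg _) (hφ1 q)
  rw [dist_eq_norm] at hvq
  linarith [norm_le_norm_add_norm_sub' v q]

lemma exists_separating_dual_mk_le_densChar {E : Submodule ℝ X} (hE : IsClosed (E : Set X)) :
    ∃ L : Set (StrongDual ℝ X), #L ≤ densChar (X ⧸ E) ∧ ∀ v, (∀ g ∈ L, g v = 0) → v ∈ E := by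
  obtain ⟨s, hs, hcard⟩ := exists_dense_mk_le_densChar (X ⧸ E)
  choose φ hφ1 hφ using fun q : X ⧸ E => exists_dual_vector'' ℝ q
  refine ⟨(fun q => (φ q).comp E.mkQL) '' s, mk_image_le.trans hcard, fun v hv => ?_⟩
  have h0 := norm_eq_zero_of_dense_of_forall_dual hs hφ1 hφ fun q hq => hv _ ⟨q, hq, rfl⟩
  exact hE.closure_subset ((QuotientAddGroup.norm_mk_eq_zero_iff_mem_closure
    (S := E.toAddSubgroup)).1 h0)

def preannihilator (B : Set (StrongDual ℝ X)) : Submodule ℝ X :=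
  ⨅ b ∈ B, LinearMap.ker (b : X →ₗ[ℝ] ℝ)

lemma mem_preannihilator {B : Set (StrongDual ℝ X)} {v : X} :
    v ∈ preannihilator B ↔ ∀ b ∈ B, b v = 0 := by
  simp [preannihilator]

lemma isClosed_preannihilator (B : Set (StrongDual ℝ X)) :
    IsClosed (preannihilator B : Set X) := by
  simp only [preannihilator, Submodule.coe_iInf]
  exact isClosed_biInter fun b _ => ContinuousLinearMap.isClosed_ker b

/-- `|b u| ≤ infDist u Y` for all `u` says that `b` has norm at most `1` and vanishes on `Y`. -/
def NormsQuotientOn (B : Set (StrongDual ℝ X)) (Y : Submodule ℝ X) (D : Set X) : Prop :=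
  ∀ a ∈ D, ∃ b ∈ B, (∀ u, |b u| ≤ infDist u Y) ∧ b a = infDist a Y

lemma infDist_le_infDist_add_of_normsQuotientOn {B : Set (StrongDual ℝ X)} {Y : Submodule ℝ X}
    {D : Set X} (hB : NormsQuotientOn B Y D) {s w : X} (hs : s ∈ closure D)
    (hw : w ∈ preannihilator B) : infDist s Y ≤ infDist (s + w) Y := by
  refine closure_minimal (fun a ha => ?_) (isClosed_le (continuous_infDist_pt _)
    ((continuous_infDist_pt _).comp (continuous_add_const w))) hs
  obtain ⟨b, hbB, hb, hba⟩ := hB a ha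
  calc infDist a Y = b (a + w) := by rw [map_add, mem_preannihilator.1 hw b hbB, add_zero, hba]
    _ ≤ |b (a + w)| := le_abs_self _
    _ ≤ infDist (a + w) Y := hb _

lemma norm_le_norm_add_of_normsQuotientOn_bot {B : Set (StrongDual ℝ X)} {D : Set X}
    (hB : NormsQuotientOn B ⊥ D) {s w : X} (hs : s ∈ closure D) (hw : w ∈ preannihilator B) :
    ‖s‖ ≤ ‖s + w‖ := by
  simpa using infDist_le_infDist_add_of_normsQuotientOn hB hs hw

lemma exists_normsQuotientOn_of_countable_support {ι : Type u} (x : ι → X)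
    (hcnt : ∀ g : StrongDual ℝ X, {i | g (x i) ≠ 0}.Countable) (Y : Submodule ℝ X)
    (G : Set (StrongDual ℝ X)) :
    ∃ (J : Set ι) (B : Set (StrongDual ℝ X)) (D : Set X), G ⊆ B ∧ #D ≤ max ℵ₀ #G ∧
      (∀ b ∈ B, ∀ i, b (x i) ≠ 0 → i ∈ J) ∧ (Submodule.span ℝ (x '' J) : Set X) ⊆ closure D ∧
      NormsQuotientOn B ⊥ D ∧ NormsQuotientOn B Y D := by
  set κ := max ℵ₀ #G
  have hκ : ℵ₀ ≤ κ := le_max_left _ _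
  let supp : Set (StrongDual ℝ X) → Set ι := fun B => ⋃ b ∈ B, {i | b (x i) ≠ 0}
  choose approx happrox_card happrox using fun A : Set X => exists_mk_le_span_subset_closure A
  choose nf hnf using fun (Z : Submodule ℝ X) (a : X) => exists_dual_abs_le_infDist Z a
  let approxOf : Set (StrongDual ℝ X) → Set X := fun B => approx (x '' supp B)
  let step : Set (StrongDual ℝ X) → Set (StrongDual ℝ X) := fun B =>
    B ∪ nf ⊥ '' approxOf B ∪ nf Y '' approxOf B
  let Bn : ℕ → Set (StrongDual ℝ X) := fun n => step^[n] G
  have hBn_succ (n : ℕ) : Bn (n + 1) = step (Bn n) := Function.iterate_succ_apply' step n G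
  have hmono : Monotone Bn := monotone_nat_of_le_succ fun n => by
    rw [hBn_succ]
    exact subset_union_left.trans subset_union_left
  have happroxOf_card {B : Set (StrongDual ℝ X)} (hB : #B ≤ κ) : #(approxOf B) ≤ κ :=
    (happrox_card _).trans <| max_le hκ <| mk_image_le.trans <|
      mk_biUnion_le_of_mk_le hκ hB fun b _ => (hcnt b).le_aleph0.trans hκ
  have hBn_card (n : ℕ) : #(Bn n) ≤ κ := by
    induction n with
    | zero => exact le_max_right _ _
    | succ n ih =>
      have himage (f : X → StrongDual ℝ X) : #(f '' approxOf (Bn n)) ≤ κ :=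
        mk_image_le.trans (happroxOf_card ih)
      rw [hBn_succ]
      exact (mk_union_le _ _).trans <| add_le_of_le hκ
        ((mk_union_le _ _).trans (add_le_of_le hκ ih (himage _))) (himage _)
  have hnorms : ∀ Z ∈ ({⊥, Y} : Set (Submodule ℝ X)),
      NormsQuotientOn (⋃ n, Bn n) Z (⋃ n, approxOf (Bn n)) := by
    rintro Z hZ a ⟨_, ⟨n, rfl⟩, ha⟩
    refine ⟨nf Z a, mem_iUnion.2 ⟨n + 1, ?_⟩, hnf Z a⟩
    rw [hBn_succ]
    rcases hZ with rfl | rfl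
    exacts [Or.inl (Or.inr (mem_image_of_mem _ ha)), Or.inr (mem_image_of_mem _ ha)]
  refine ⟨⋃ n, supp (Bn n), ⋃ n, Bn n, ⋃ n, approxOf (Bn n), subset_iUnion Bn 0,
    mk_iUnion_nat_le hκ fun n => happroxOf_card (hBn_card n), ?_, ?_,
    hnorms ⊥ (by simp), hnorms Y (by simp)⟩
  · rintro b ⟨_, ⟨n, rfl⟩, hb⟩ i hi
    exact mem_iUnion.2 ⟨n, mem_biUnion hb hi⟩
  · rw [image_iUnion]
    exact span_iUnion_subset_closure_iUnion
      (fun m n hmn => image_mono (biUnion_subset_biUnion_left (hmono hmn))) fun n => happrox _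

end Seminormed

section Normed

variable {X : Type u} [NormedAddCommGroup X] [NormedSpace ℝ X]

lemma Submodule.sup_eq_top_of_norm_le_norm_add [CompleteSpace X] {S N : Submodule ℝ X}
    (hS : IsClosed (S : Set X)) (hN : IsClosed (N : Set X))
    (hnorm : ∀ s ∈ S, ∀ w ∈ N, ‖s‖ ≤ ‖s + w‖) (hdense : Dense ((S ⊔ N : Submodule ℝ X) : Set X)) :
    S ⊔ N = ⊤ := by
  have := hS.completeSpace_coe
  have := hN.completeSpace_coe
  let T : S × N →L[ℝ] X := S.subtypeL.coprod N.subtypeL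
  have hrange : range T = (S ⊔ N : Submodule ℝ X) := by
    ext v
    simp [T, Submodule.mem_sup]
  have hT : AntilipschitzWith 2 T := T.antilipschitz_of_bound fun p => by
    have h1 : ‖p.1‖ ≤ ‖T p‖ := hnorm _ p.1.2 _ p.2.2
    have h2 : ‖p.2‖ ≤ ‖T p‖ + ‖p.1‖ := by
      simpa [T] using norm_sub_le ((p.1 : X) + p.2) (p.1 : X)
    rw [Prod.norm_def, max_le_iff]
    constructor <;> push_cast <;> linarith [norm_nonneg (T p)]
  have hclosed : IsClosed ((S ⊔ N : Submodule ℝ X) : Set X) :=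
    hrange ▸ hT.isClosed_range T.uniformContinuous
  exact Submodule.eq_top_iff'.2 fun v => hclosed.closure_subset (hdense v)

lemma exists_mem_closure_sub_mem_preannihilator [CompleteSpace X] {ι : Type*} {x : ι → X}
    (hx : closedSpan (range x) = ⊤) {J : Set ι} {B : Set (StrongDual ℝ X)} {D : Set X}
    (hJ : ∀ b ∈ B, ∀ i, b (x i) ≠ 0 → i ∈ J)
    (hD : (Submodule.span ℝ (x '' J) : Set X) ⊆ closure D) (hbot : NormsQuotientOn B ⊥ D)
    {Y : Submodule ℝ X} (hY : IsClosed (Y : Set X)) (hYD : NormsQuotientOn B Y D)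
    {y : X} (hy : y ∈ Y) : ∃ p ∈ Y, p ∈ closure D ∧ y - p ∈ preannihilator B := by
  set S := closedSpan (x '' J)
  have hSD : (S : Set X) ⊆ closure D :=
    (Submodule.topologicalClosure_coe _).trans_subset (closure_minimal hD isClosed_closure)
  have hrange : range x ⊆ (S ⊔ preannihilator B : Submodule ℝ X) := by
    rintro _ ⟨i, rfl⟩
    by_cases hi : ∃ b ∈ B, b (x i) ≠ 0
    · obtain ⟨b, hb, hbi⟩ := hi
      exact Submodule.mem_sup_left <| Submodule.le_topologicalClosure _ <|
        Submodule.subset_span (mem_image_of_mem x (hJ b hb i hbi))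
    · push Not at hi
      exact Submodule.mem_sup_right (mem_preannihilator.2 hi)
  have hdense : Dense ((S ⊔ preannihilator B : Submodule ℝ X) : Set X) := by
    rw [Submodule.dense_iff_topologicalClosure_eq_top, eq_top_iff, ← hx]
    exact Submodule.topologicalClosure_mono (Submodule.span_le.2 hrange)
  have htop := Submodule.sup_eq_top_of_norm_le_norm_add (Submodule.isClosed_topologicalClosure _)
    (isClosed_preannihilator B)
    (fun s hs w hw => norm_le_norm_add_of_normsQuotientOn_bot hbot (hSD hs) hw) hdense
  obtain ⟨p, hp, w, hw, rfl⟩ := Submodule.mem_sup.1 (htop ▸ Submodule.mem_top : y ∈ S ⊔ _)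
  refine ⟨p, ?_, hSD hp, by rwa [add_sub_cancel_left]⟩
  have hpY : infDist p Y ≤ 0 := by
    simpa [infDist_zero_of_mem hy] using infDist_le_infDist_add_of_normsQuotientOn hYD (hSD hp) hw
  exact hY.closure_subset <|
    (mem_closure_iff_infDist_zero ⟨0, Y.zero_mem⟩).2 (le_antisymm hpY infDist_nonneg)

theorem IsWLD.exists_mk_le_subset_closure [CompleteSpace X] (hwld : IsWLD X)
    {Y : Submodule ℝ X} (hY : IsClosed (Y : Set X)) {E : ℕ → Submodule ℝ X}
    (hE : ∀ n, IsClosed (E n : Set X)) :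
    ∃ D : Set X, #D ≤ max (densChar ↥(Y ⊓ ⨅ n, E n)) (⨆ n, densChar (X ⧸ E n)) ∧
      (Y : Set X) ⊆ closure D := by
  obtain ⟨ι, x, -, -, -, hx, -, hcnt⟩ := hwld
  set κ := ⨆ n, densChar (X ⧸ E n)
  have hbdd : BddAbove (range fun n => densChar (X ⧸ E n)) := Cardinal.bddAbove_of_small
  have hκ : ℵ₀ ≤ κ := aleph0_le_densChar.trans (le_ciSup hbdd 0)
  choose L hLcard hL using fun n => exists_separating_dual_mk_le_densChar (hE n)
  obtain ⟨J, B, D₁, hLB, hD₁card, hJ, hD₁, hbot, hYD⟩ :=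
    exists_normsQuotientOn_of_countable_support x hcnt Y (⋃ n, L n)
  obtain ⟨D₂, hD₂card, hD₂⟩ :=
    exists_mk_le_densChar_subset_closure ((Y ⊓ ⨅ n, E n : Submodule ℝ X) : Set X)
  have hLcard' : #(⋃ n, L n) ≤ κ :=
    mk_iUnion_nat_le hκ fun n => (hLcard n).trans (le_ciSup hbdd n)
  refine ⟨D₁ + D₂, mk_add_le.trans (mul_le_of_le (le_max_of_le_right hκ)
    (le_max_of_le_right (hD₁card.trans (max_le hκ hLcard'))) (le_max_of_le_left hD₂card)),
    fun y hy => ?_⟩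
  obtain ⟨p, hpY, hpD, hyp⟩ := exists_mem_closure_sub_mem_preannihilator hx hJ hD₁ hbot hY hYD hy
  have hyp' : y - p ∈ Y ⊓ ⨅ n, E n := Submodule.mem_inf.2 ⟨Y.sub_mem hy hpY,
    Submodule.mem_iInf _ |>.2 fun n => hL n _ fun g hg =>
      mem_preannihilator.1 hyp g (hLB (mem_iUnion.2 ⟨n, hg⟩))⟩
  simpa using map_mem_closure₂ continuous_add hpD (hD₂ hyp') fun a ha b hb => add_mem_add ha hb

end Normed

theorem stmt16 {X : Type u} [NormedAddCommGroup X] [NormedSpace ℝ X] [CompleteSpace X]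
    (hwld : IsWLD X) :
    (∀ Y Z : Submodule ℝ X, IsClosed (Y : Set X) → IsClosed (Z : Set X) →
      ¬ TopologicalSpace.IsSeparable (Y : Set X) →
      TopologicalSpace.SeparableSpace (X ⧸ Z) →
      densChar ↥(Y ⊓ Z) = densChar ↥Y) ∧
    (∀ E : ℕ → Submodule ℝ X, (∀ n, IsClosed ((E n : Set X))) →
      densChar X = max (densChar ↥(⨅ n, E n)) (⨆ n, densChar (X ⧸ E n))) := by
  refine ⟨fun Y Z hY hZ _ hZsep => ?_, fun E hE => ?_⟩
  · obtain ⟨D, hDcard, hD⟩ := hwld.exists_mk_le_subset_closure hY (E := fun _ => Z) fun _ => hZ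
    simp only [ciSup_const, densChar_eq_aleph0] at hDcard
    rw [iInf_const] at hDcard
    refine le_antisymm (densChar_subtype_mono inf_le_left) ?_
    exact (densChar_subtype_le hD).trans
      (max_le aleph0_le_densChar (hDcard.trans (max_le le_rfl aleph0_le_densChar)))
  · obtain ⟨D, hDcard, hD⟩ := hwld.exists_mk_le_subset_closure (Y := ⊤) (by simp) hE
    rw [top_inf_eq] at hDcard
    refine le_antisymm ((Dense.densChar_le fun v => hD trivial).trans
      (max_le (le_max_of_le_left aleph0_le_densChar) hDcard)) (max_le ?_ ?_)
    · exact densChar_subtype_le_densChar _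
    · exact ciSup_le' fun n => (E n).mkQ_surjective.denseRange.densChar_le (E n).mkQL.continuous
end

section
/- Let X be a real Banach space with the property that for every countable sequence (f_n)_{n<ω} ⊆ X* there exists a family {x_γ}_{γ∈Γ} ⊆ X with closed linear span equal to X such that {γ ∈ Γ : f_n(x_γ) ≠ 0} is countable for every n < ω. Then X satisfies (σ): for every sequence (Z_n)_{n<ω} of closed subspaces of X with X/Z_n separable for each n, the quotient X/⋂_{n<ω}Z_n is separable. In particular, every WLD Banach space satisfies (σ). -/
open Cardinal Ordinal Set Pointwise

universe u

/-- property (σ): coseparable closed subspaces are stable under countable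
intersections, i.e. countable intersections of subspaces with separable quotient
again have separable quotient. -/
def SigmaProp (X : Type u) [NormedAddCommGroup X] [NormedSpace ℝ X] : Prop :=
  ∀ Z : ℕ → Submodule ℝ X, (∀ n, IsClosed ((Z n : Set X))) →
    (∀ n, TopologicalSpace.SeparableSpace (X ⧸ Z n)) →
    TopologicalSpace.SeparableSpace (X ⧸ (⨅ n, Z n))

/-!
A closed subspace `Z` with `X ⧸ Z` separable is the common kernel of countably many functionals
(pull back a separating sequence of functionals on the separable quotient). Collecting these
sequences for all `Z n` gives one sequence `F` whose common kernel lies in `⋂ Z n`. For a family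
`x γ` as in the hypothesis, only countably many `x γ` lie outside `⋂ Z n`, namely those with
`F m (x γ) ≠ 0` for some `m`; the images of the others vanish in `X ⧸ ⋂ Z n`, so the quotient is
the closed span of countably many vectors.
-/

open TopologicalSpace

/-- Norming functionals at the points of a dense sequence. -/
theorem exists_seq_strongDual_separating (𝕜 E : Type*) [RCLike 𝕜] [NormedAddCommGroup E]
    [NormedSpace 𝕜 E] [SeparableSpace E] :
    ∃ g : ℕ → StrongDual 𝕜 E, ∀ v : E, (∀ k, g k v = 0) → v = 0 := by
  choose g hg_norm hg_eq using fun k => exists_dual_vector'' 𝕜 (denseSeq E k)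
  refine ⟨g, fun v hv => norm_le_zero_iff.mp ?_⟩
  have key : ∀ w, ‖v‖ ≤ 2 * ‖v - w‖ := by
    refine isClosed_property (denseRange_denseSeq E) (isClosed_le (by fun_prop) (by fun_prop))
      fun k => ?_
    set y := denseSeq E k
    have hy : ‖y‖ ≤ ‖v - y‖ :=
      calc ‖y‖ = ‖g k y‖ := by simp [y, hg_eq k]
        _ = ‖g k (y - v)‖ := by simp [hv k]
        _ ≤ 1 * ‖y - v‖ := (g k).le_of_opNorm_le (hg_norm k) _
        _ = ‖v - y‖ := by rw [one_mul, norm_sub_rev]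
    linarith [norm_le_insert' v y]
  simpa using key v

theorem Submodule.exists_seq_strongDual_forall_eq_zero_imp_mem {X : Type*}
    [NormedAddCommGroup X] [NormedSpace ℝ X] (Z : Submodule ℝ X) [IsClosed (Z : Set X)]
    [SeparableSpace (X ⧸ Z)] :
    ∃ f : ℕ → StrongDual ℝ X, ∀ v : X, (∀ k, f k v = 0) → v ∈ Z := by
  obtain ⟨g, hg⟩ := exists_seq_strongDual_separating ℝ (X ⧸ Z)
  refine ⟨fun k => (g k).comp Z.mkQL, fun v hv => ?_⟩
  exact (Submodule.Quotient.mk_eq_zero Z).mp (hg _ hv)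

theorem exists_seq_strongDual_forall_eq_zero_imp_mem_iInf {X : Type*}
    [NormedAddCommGroup X] [NormedSpace ℝ X] (Z : ℕ → Submodule ℝ X)
    (hZc : ∀ n, IsClosed (Z n : Set X)) (hZs : ∀ n, SeparableSpace (X ⧸ Z n)) :
    ∃ F : ℕ → StrongDual ℝ X, ∀ v : X, (∀ m, F m v = 0) → v ∈ ⨅ n, Z n := by
  choose f hf using fun n =>
    have := hZc n; have := hZs n; (Z n).exists_seq_strongDual_forall_eq_zero_imp_mem
  refine ⟨fun m => f m.unpair.1 m.unpair.2, fun v hv => Submodule.mem_iInf _ |>.mpr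
    fun n => hf n v fun k => ?_⟩
  simpa using hv (Nat.pair n k)

theorem separableSpace_quotient_of_closedSpan_eq_top {X : Type*} [SeminormedAddCommGroup X]
    [NormedSpace ℝ X] {Γ : Type*} {x : Γ → X} (hx : closedSpan (range x) = ⊤)
    (Q : Submodule ℝ X) (hQ : {γ | x γ ∉ Q}.Countable) :
    SeparableSpace (X ⧸ Q) := by
  set S := Q.mkQ '' (x '' {γ | x γ ∉ Q})
  have hrange : range (Q.mkQ ∘ x) ⊆ Submodule.span ℝ S := by
    rintro _ ⟨γ, rfl⟩
    by_cases hγ : x γ ∈ Q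
    · simp [(Submodule.Quotient.mk_eq_zero Q).mpr hγ]
    · exact Submodule.subset_span ⟨x γ, ⟨γ, hγ, rfl⟩, rfl⟩
  have hdense : Dense (Submodule.span ℝ S : Set (X ⧸ Q)) := by
    have hspan : Dense (Submodule.span ℝ (range x) : Set X) :=
      Submodule.dense_iff_topologicalClosure_eq_top.mpr hx
    refine (Q.mkQ_surjective.denseRange.dense_image Q.mkQL.continuous hspan).mono ?_
    rw [← Submodule.map_coe, Submodule.map_span, ← range_comp]
    exact Submodule.span_le.mpr hrange
  exact hdense.isSeparable_iff.mp ((hQ.image x).image _).isSeparable.span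

theorem sigmaProp_of_forall_seq_strongDual {X : Type u} [NormedAddCommGroup X]
    [NormedSpace ℝ X]
    (H : ∀ f : ℕ → StrongDual ℝ X, ∃ (Γ : Type u) (x : Γ → X),
      closedSpan (range x) = ⊤ ∧ ∀ n, {γ | f n (x γ) ≠ 0}.Countable) :
    SigmaProp X := by
  intro Z hZc hZs
  obtain ⟨F, hF⟩ := exists_seq_strongDual_forall_eq_zero_imp_mem_iInf Z hZc hZs
  obtain ⟨Γ, x, hx, hcount⟩ := H F
  refine separableSpace_quotient_of_closedSpan_eq_top hx _ <|
    (countable_iUnion hcount).mono fun γ hγ => ?_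
  by_contra h
  simp only [mem_iUnion, mem_ofPred_eq, not_exists, not_not] at h
  exact hγ (hF _ h)

theorem stmt17_general {X : Type u} [NormedAddCommGroup X] [NormedSpace ℝ X] :
    ((∀ f : ℕ → (X →L[ℝ] ℝ), ∃ (Γ : Type u) (x : Γ → X),
        closedSpan (Set.range x) = ⊤ ∧ ∀ n, {γ | f n (x γ) ≠ 0}.Countable) →
      SigmaProp X) ∧
    (IsWLD X → SigmaProp X) := by
  refine ⟨sigmaProp_of_forall_seq_strongDual, fun ⟨ι, x, _, _, _, hx, _, hcount⟩ => ?_⟩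
  exact sigmaProp_of_forall_seq_strongDual fun g => ⟨ι, x, hx, fun n => hcount (g n)⟩

theorem stmt17 {X : Type u} [NormedAddCommGroup X] [NormedSpace ℝ X] [CompleteSpace X] :
    ((∀ f : ℕ → (X →L[ℝ] ℝ), ∃ (Γ : Type u) (x : Γ → X),
        closedSpan (Set.range x) = ⊤ ∧ ∀ n, {γ | f n (x γ) ≠ 0}.Countable) →
      SigmaProp X) ∧
    (IsWLD X → SigmaProp X) :=
  stmt17_general
end
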